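/- arXiv:math/0112133 — 2 statements merged into one kernel-verified Lean document; each statement's English description precedes it below -/
import Mathlib

section
/- Let α ⊆ λ ⊆ l×k and β ⊆ μ ⊆ l×k be partitions. Then κ(α,β) ⊆ κ(λ,μ), where κ(ρ,τ) denotes the intersection of all partitions γ ⊆ l×k with c^γ_{ρ,τ} ≠ 0 (and κ(ρ,τ) = l×k by convention if no such γ exists). -/
open YoungDiagram

namespace QCGrass

/-- The rectangular Young diagram with `m` rows of length `M`. -/
def rect (m M : ℕ) : YoungDiagram :=
  ⟨Finset.range m ×ˢ Finset.range M, by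
    intro a b hba ha
    simp only [Finset.coe_product, Set.mem_prod, Finset.mem_coe, Finset.mem_range] at *
    exact ⟨lt_of_le_of_lt hba.1 ha.1, lt_of_le_of_lt hba.2 ha.2⟩⟩

/-- The cells of the skew shape `nu / lam`. -/
def skewCells (lam nu : YoungDiagram) : Finset (ℕ × ℕ) := nu.cells \ lam.cells

/-- `T` is a Littlewood–Richardson skew tableau of shape `nu / lam` and content `mu`:
entries (valued in `{1, 2, …}`, with `0` meaning "no entry") are supported exactly on the
skew shape `nu / lam`, weakly increase along rows, strictly increase down columns, the number
of entries equal to `r + 1` is the `r`-th row length of `mu`, and the reverse reading word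
(rows read right to left, top to bottom) is a lattice word. -/
def IsLRTableau (lam mu nu : YoungDiagram) (T : ℕ × ℕ → ℕ) : Prop :=
  lam ≤ nu ∧
  (∀ p : ℕ × ℕ, 1 ≤ T p ↔ p ∈ skewCells lam nu) ∧
  (∀ i j j' : ℕ, j ≤ j' → (i, j) ∈ skewCells lam nu → (i, j') ∈ skewCells lam nu →
      T (i, j) ≤ T (i, j')) ∧
  (∀ i i' j : ℕ, i < i' → (i, j) ∈ skewCells lam nu → (i', j) ∈ skewCells lam nu →
      T (i, j) < T (i', j)) ∧
  (∀ r : ℕ, ((skewCells lam nu).filter (fun p => T p = r + 1)).card = mu.rowLen r) ∧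
  (∀ i j r : ℕ,
      ((skewCells lam nu).filter
        (fun p => T p = r + 2 ∧ (p.1 < i ∨ (p.1 = i ∧ j ≤ p.2)))).card ≤
      ((skewCells lam nu).filter
        (fun p => T p = r + 1 ∧ (p.1 < i ∨ (p.1 = i ∧ j ≤ p.2)))).card)

/-- The Littlewood–Richardson coefficient `c^nu_{lam, mu}`, defined as the number of
Littlewood–Richardson skew tableaux of shape `nu / lam` and content `mu`. -/
noncomputable def lrCoeff (lam mu nu : YoungDiagram) : ℕ :=
  Nat.card {T : ℕ × ℕ → ℕ // IsLRTableau lam mu nu T}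

/-- The set of boxes (in `0`-indexed matrix coordinates) of `mu` rotated 180 degrees and
placed in the lower-right corner of the `l × k` rectangle. -/
def rotSet (l k : ℕ) (mu : YoungDiagram) : Set (ℕ × ℕ) :=
  {p | p.1 < l ∧ p.2 < k ∧ k - mu.rowLen (l - 1 - p.1) ≤ p.2}

/-- Two boxes are adjacent when they share an edge. -/
def Adjacent (p q : ℕ × ℕ) : Prop :=
  (p.1 = q.1 ∧ (p.2 = q.2 + 1 ∨ q.2 = p.2 + 1)) ∨
  (p.2 = q.2 ∧ (p.1 = q.1 + 1 ∨ q.1 = p.1 + 1))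

/-- `mu` is obtained from `lam` by removing a legal `n`-rim hook: `mu ⊆ lam` (so the removal
leaves a Young diagram), the removed set has `n` boxes, is edge-connected, and contains
no `2 × 2` square. -/
def IsRimHookRemoval (n : ℕ) (lam mu : YoungDiagram) : Prop :=
  mu ≤ lam ∧ (skewCells mu lam).card = n ∧
  (∀ p ∈ skewCells mu lam, ∀ q ∈ skewCells mu lam,
    Relation.ReflTransGen
      (fun a b => a ∈ skewCells mu lam ∧ b ∈ skewCells mu lam ∧ Adjacent a b) p q) ∧
  ¬ ∃ i j : ℕ, (i, j) ∈ skewCells mu lam ∧ (i + 1, j) ∈ skewCells mu lam ∧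
      (i, j + 1) ∈ skewCells mu lam ∧ (i + 1, j + 1) ∈ skewCells mu lam

/-- One legal `n`-rim hook removal step. -/
def RimStep (n : ℕ) (lam mu : YoungDiagram) : Prop := IsRimHookRemoval n lam mu

/-- A diagram is an `n`-core when no legal `n`-rim hook can be removed from it. -/
def IsCore (n : ℕ) (t : YoungDiagram) : Prop := ¬ ∃ s, RimStep n t s

/-- `ReachesIn n m a b` : `b` is obtained from `a` by `m` successive legal `n`-rim hook
removals. -/
def ReachesIn (n : ℕ) : ℕ → YoungDiagram → YoungDiagram → Prop
  | 0 => fun a b => a = b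
  | m + 1 => fun a b => ∃ c, RimStep n a c ∧ ReachesIn n m c b

/-- The width (number of occupied columns) of the strip removed in passing
from `lam` to `mu`. -/
def hookWidth (lam mu : YoungDiagram) : ℕ := ((skewCells mu lam).image Prod.snd).card

/-- The height (number of occupied rows) of the strip removed in passing
from `lam` to `mu`. -/
def hookHeight (lam mu : YoungDiagram) : ℕ := ((skewCells mu lam).image Prod.fst).card

/-- `ReachesInSign n k m s a b` : `b` is obtained from `a` by `m` successive legal `n`-rim
hook removals, and `s = ∏ (-1)^(k - width(R_i))` over the removed hooks `R_i`. -/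
def ReachesInSign (n k : ℕ) : ℕ → ℤ → YoungDiagram → YoungDiagram → Prop
  | 0 => fun s a b => a = b ∧ s = 1
  | m + 1 => fun s a b => ∃ c s', RimStep n a c ∧ ReachesInSign n k m s' c b ∧
      s = (-1) ^ (k - hookWidth a c) * s'

/-- `diagLen lam` is the number of diagonal boxes of `lam`, i.e. the side length of the
largest square contained in `lam`. -/
def diagLen (lam : YoungDiagram) : ℕ := (lam.cells.filter fun p => p.1 = p.2).card

/-- A `d × d` square of boxes fits inside `lam ∩ rotate(mu)` within the `l × k` rectangle. -/
def SquareFits (l k : ℕ) (lam mu : YoungDiagram) (d : ℕ) : Prop :=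
  ∃ i j : ℕ, ∀ i' j' : ℕ, i ≤ i' → i' < i + d → j ≤ j' → j' < j + d →
    (i', j') ∈ lam.cells ∧ (i', j') ∈ rotSet l k mu

/-- The triple product `σ_lam · σ_mu · σ_nu` is nonzero in `H^*(Gr(l, l+k))`: some `rho ⊆ l × k`
has `c^rho_{lam,mu} ≠ 0` and `rho` is disjoint from `rotate(nu)`. -/
def TripleNonzero (l k : ℕ) (lam mu nu : YoungDiagram) : Prop :=
  ∃ rho, rho ≤ rect l k ∧ lrCoeff lam mu rho ≠ 0 ∧
    ∀ i, i < l → rho.rowLen i + nu.rowLen (l - 1 - i) ≤ k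

/-!
Record an LR tableau of shape `γ / λ` and content `μ` as the chain of shapes
`λ = f 0 ⊆ f 1 ⊆ ⋯ ⊆ γ`, where `f t` adds the cells of entry `≤ t`: consecutive shapes differ
by horizontal strips of sizes `μ t`, subject to the lattice condition. Removing a corner cell
of the inner shape, or the rightmost cell in the lowest row of the strip `s` when
`μ (s + 1) < μ s`, and letting the hole slide outwards through the higher levels (jeu de
taquin) gives a chain of the same kind whose shapes are contained in the old ones, with one
cell less in the inner shape, resp. in the row `s` of the content. Repeating this until the
inner shape is `α` and the content is `β` yields an LR tableau of shape `δ / α` and content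
`β` with `δ ⊆ γ`. So every `γ` with `c^γ_{λ,μ} ≠ 0` contains some `δ ⊆ l × k` with
`c^δ_{α,β} ≠ 0`, hence contains `κ(α,β)`.
-/

open Finset

theorem _root_.YoungDiagram.le_iff_rowLen_le {μ ν : YoungDiagram} :
    μ ≤ ν ↔ ∀ i, μ.rowLen i ≤ ν.rowLen i := by
  refine ⟨fun h i => ?_, fun h => ?_⟩
  · by_contra! hlt
    exact (mem_iff_lt_rowLen.mp (h (mem_iff_lt_rowLen.mpr hlt))).false
  · rw [← cells_subset_iff]
    rintro ⟨i, j⟩ hc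
    rw [mem_cells, mem_iff_lt_rowLen] at hc ⊢
    exact hc.trans_le (h i)

theorem _root_.YoungDiagram.rowLen_eq_of_mem_iff {μ : YoungDiagram} {i c : ℕ}
    (h : ∀ j, (i, j) ∈ μ ↔ j < c) : μ.rowLen i = c :=
  eq_of_forall_lt_iff fun j => by rw [← mem_iff_lt_rowLen, h]

theorem _root_.YoungDiagram.rowLen_eq_zero_of_colLen_le {μ : YoungDiagram} {i : ℕ}
    (h : μ.colLen 0 ≤ i) : μ.rowLen i = 0 := by
  by_contra hne
  have := mem_iff_lt_colLen.mp (mem_iff_lt_rowLen.mpr (Nat.pos_of_ne_zero hne))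
  omega

theorem _root_.YoungDiagram.exists_rowLen_eq {d : ℕ → ℕ} (hd : Antitone d) {N : ℕ}
    (hN : ∀ i, N ≤ i → d i = 0) : ∃ μ : YoungDiagram, ∀ i, μ.rowLen i = d i := by
  refine ⟨ofRowLens (List.ofFn fun i : Fin N => d i)
    (hd.comp_monotone Fin.val_strictMono.monotone).sortedGE_ofFn, fun i => ?_⟩
  refine rowLen_eq_of_mem_iff fun j => ?_
  rw [mem_ofRowLens]
  simp only [List.length_ofFn, List.getElem_ofFn]
  by_cases hi : i < N
  · exact ⟨fun ⟨_, h⟩ => h, fun h => ⟨hi, h⟩⟩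
  · simp [hi, hN i (by omega)]

theorem mem_skewCells_iff {lam nu : YoungDiagram} {i j : ℕ} :
    (i, j) ∈ skewCells lam nu ↔ lam.rowLen i ≤ j ∧ j < nu.rowLen i := by
  rw [skewCells, mem_sdiff, mem_cells, mem_cells, mem_iff_lt_rowLen, mem_iff_lt_rowLen, not_lt,
    and_comm]

section Counting

theorem _root_.Finset.eq_Ico_of_downward_closed {s : Finset ℕ} {a : ℕ} (ha : ∀ x ∈ s, a ≤ x)
    (hs : ∀ x ∈ s, ∀ y, a ≤ y → y ≤ x → y ∈ s) : s = Ico a (a + #s) := by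
  have hsub : Ico a (a + #s) ⊆ s := by
    intro y hy
    rw [mem_Ico] at hy
    by_contra hys
    have : s ⊆ Ico a y := fun x hx =>
      mem_Ico.mpr ⟨ha x hx, lt_of_not_ge fun hyx => hys (hs x hx y hy.1 hyx)⟩
    have := card_le_card this
    rw [Nat.card_Ico] at this
    omega
  exact (eq_of_subset_of_card_le hsub (by simp)).symm

variable (S : Finset (ℕ × ℕ)) (P : ℕ × ℕ → Prop) [DecidablePred P]

theorem card_filter_fst_lt (i : ℕ) :
    #{p ∈ S | P p ∧ p.1 < i} = ∑ i' ∈ range i, #{p ∈ S | p.1 = i' ∧ P p} := by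
  rw [card_eq_sum_card_fiberwise (f := Prod.fst) (t := range i) fun p hp => by
    simpa using (mem_filter.mp hp).2.2]
  refine sum_congr rfl fun i' hi' => congrArg card (ext fun p => ?_)
  simp only [mem_filter, mem_range] at hi' ⊢
  constructor
  · rintro ⟨⟨hp, hP, -⟩, rfl⟩
    exact ⟨hp, rfl, hP⟩
  · rintro ⟨hp, rfl, hP⟩
    exact ⟨⟨hp, hP, hi'⟩, rfl⟩

theorem card_filter_fst_lt_or_eq (i j : ℕ) :
    #{p ∈ S | P p ∧ (p.1 < i ∨ (p.1 = i ∧ j ≤ p.2))} =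
      #{p ∈ S | P p ∧ p.1 < i} + #{p ∈ S | p.1 = i ∧ P p ∧ j ≤ p.2} := by
  rw [← card_union_of_disjoint (disjoint_filter.mpr fun p _ h h' => by omega), ← filter_or]
  refine congrArg card (filter_congr fun p _ => ?_)
  tauto

end Counting

section LRTableau

variable {lam mu nu : YoungDiagram} {T : ℕ × ℕ → ℕ}

theorem IsLRTableau.eq_zero_of_notMem (hT : IsLRTableau lam mu nu T) {p : ℕ × ℕ}
    (hp : p ∉ skewCells lam nu) : T p = 0 := by
  by_contra h
  exact hp ((hT.2.1 p).mp (Nat.one_le_iff_ne_zero.mpr h))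

theorem IsLRTableau.le_colLen (hT : IsLRTableau lam mu nu T) (p : ℕ × ℕ) :
    T p ≤ mu.colLen 0 := by
  rcases hT0 : T p with _ | r
  · exact Nat.zero_le _
  have hp : p ∈ skewCells lam nu := (hT.2.1 p).mp (by omega)
  have hrow : 0 < mu.rowLen r := by
    rw [← hT.2.2.2.2.1 r]
    exact card_pos.mpr ⟨p, mem_filter.mpr ⟨hp, hT0⟩⟩
  exact mem_iff_lt_colLen.mp (mem_iff_lt_rowLen.mpr hrow)

theorem finite_isLRTableau (lam mu nu : YoungDiagram) :
    Finite {T : ℕ × ℕ → ℕ // IsLRTableau lam mu nu T} := by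
  let B := mu.colLen 0
  refine Finite.of_injective
    (fun T (p : skewCells lam nu) => (⟨T.1 p, Nat.lt_succ_of_le (T.2.le_colLen p)⟩ : Fin (B + 1)))
    fun T T' hTT => Subtype.ext (funext fun p => ?_)
  by_cases hp : p ∈ skewCells lam nu
  · exact congrArg Fin.val (congrFun hTT ⟨p, hp⟩)
  · rw [T.2.eq_zero_of_notMem hp, T'.2.eq_zero_of_notMem hp]

theorem lrCoeff_ne_zero_iff : lrCoeff lam mu nu ≠ 0 ↔ ∃ T, IsLRTableau lam mu nu T := by
  have := finite_isLRTableau lam mu nu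
  simp [lrCoeff, Nat.card_ne_zero, nonempty_subtype, this]

end LRTableau

def stripCount (f : ℕ → ℕ → ℕ) (t i : ℕ) : ℕ := ∑ j ∈ range i, (f (t + 1) j - f t j)

theorem stripCount_succ (f : ℕ → ℕ → ℕ) (t i : ℕ) :
    stripCount f t (i + 1) = stripCount f t i + (f (t + 1) i - f t i) :=
  sum_range_succ _ _

theorem stripCount_mono (f : ℕ → ℕ → ℕ) (t : ℕ) {i i' : ℕ} (h : i ≤ i') :
    stripCount f t i ≤ stripCount f t i' :=
  sum_le_sum_of_subset (range_subset_range.mpr h)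

/-- An LR tableau of content `c`, recorded by the row lengths `f t i` of the shapes
`f 0 ⊆ f 1 ⊆ ⋯`, where `f t` consists of the inner shape and the cells of entry `≤ t`;
all shapes lie in the rows `< N`. The field `lattice` is the lattice-word condition. -/
structure IsLRChain (c : ℕ → ℕ) (N : ℕ) (f : ℕ → ℕ → ℕ) : Prop where
  le_succ : ∀ t i, f t i ≤ f (t + 1) i
  horizontal : ∀ t i, f (t + 1) (i + 1) ≤ f t i
  eq_zero : ∀ t i, N ≤ i → f t i = 0
  stripCount_eq : ∀ t, stripCount f t N = c t
  lattice : ∀ t i, stripCount f (t + 1) (i + 1) ≤ stripCount f t i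

namespace IsLRChain

variable {c : ℕ → ℕ} {N : ℕ} {f : ℕ → ℕ → ℕ}

theorem succ_le (hf : IsLRChain c N f) (t i : ℕ) : f t (i + 1) ≤ f t i :=
  (hf.le_succ t (i + 1)).trans (hf.horizontal t i)

theorem antitone (hf : IsLRChain c N f) (t : ℕ) : Antitone (f t) :=
  antitone_nat_of_succ_le (hf.succ_le t)

theorem monotone (hf : IsLRChain c N f) (i : ℕ) : Monotone (f · i) :=
  monotone_nat_of_le_succ fun t => hf.le_succ t i

theorem stripCount_of_le (hf : IsLRChain c N f) (t : ℕ) {i : ℕ} (h : N ≤ i) :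
    stripCount f t i = c t := by
  rw [← hf.stripCount_eq t, stripCount, stripCount,
    ← sum_subset (range_subset_range.mpr h) fun x hx hnx => ?_]
  rw [hf.eq_zero _ _ (by simpa using hnx), hf.eq_zero _ _ (by simpa using hnx), Nat.sub_self]

theorem stripCount_le (hf : IsLRChain c N f) (t i : ℕ) : stripCount f t i ≤ c t := by
  rcases le_total N i with h | h
  · exact (hf.stripCount_of_le t h).le
  · exact hf.stripCount_eq t ▸ stripCount_mono f t h

theorem succ_eq_of_eq_zero (hf : IsLRChain c N f) {t : ℕ} (ht : c t = 0) (i : ℕ) :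
    f (t + 1) i = f t i := by
  rcases lt_or_ge i N with hi | hi
  · have := (sum_eq_zero_iff.mp (hf.stripCount_eq t ▸ ht : stripCount f t N = 0)) i
      (mem_range.mpr hi)
    have := hf.le_succ t i
    omega
  · rw [hf.eq_zero _ _ hi, hf.eq_zero _ _ hi]

theorem eq_of_content_eq_zero (hf : IsLRChain c N f) {M : ℕ} (hM : ∀ t, M ≤ t → c t = 0)
    {t : ℕ} (ht : M ≤ t) (i : ℕ) : f t i = f M i := by
  induction t, ht using Nat.le_induction with
  | base => rfl
  | succ t ht ih => rw [hf.succ_eq_of_eq_zero (hM t ht), ih]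

theorem le_of_content_eq_zero (hf : IsLRChain c N f) {M : ℕ} (hM : ∀ t, M ≤ t → c t = 0)
    (t i : ℕ) : f t i ≤ f M i := by
  rcases le_total t M with h | h
  · exact hf.monotone i h
  · exact (hf.eq_of_content_eq_zero hM h i).le

theorem stripCount_of_forall_eq (hf : IsLRChain c N f) {t m : ℕ}
    (hm : ∀ j, m ≤ j → f (t + 1) j = f t j) {i : ℕ} (hi : m ≤ i) : stripCount f t i = c t := by
  rw [← hf.stripCount_of_le t (le_max_right i N), stripCount, stripCount,
    sum_subset (range_subset_range.mpr (le_max_left i N)) fun j _ hj => ?_]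
  rw [hm j (by simp at hj; omega), Nat.sub_self]

theorem stripCount_succ_lt (hf : IsLRChain c N f) {t h : ℕ}
    (hmove : f (t + 2) (h + 1) = f (t + 1) h) (hstay : f (t + 1) (h + 1) < f t h) :
    stripCount f (t + 1) (h + 1) < stripCount f t h := by
  have := hf.lattice t (h + 1)
  rw [stripCount_succ f (t + 1) (h + 1), stripCount_succ f t h, hmove] at this
  have := hf.le_succ t h
  omega

end IsLRChain

section ChainOfTableau

variable {lam mu nu : YoungDiagram} {T : ℕ × ℕ → ℕ}

def chainOfTableau (lam nu : YoungDiagram) (T : ℕ × ℕ → ℕ) (t i : ℕ) : ℕ :=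
  lam.rowLen i + #{p ∈ skewCells lam nu | p.1 = i ∧ T p ≤ t}

theorem lt_chainOfTableau_iff (hT : IsLRTableau lam mu nu T) {t i j : ℕ} :
    (lam.rowLen i ≤ j ∧ j < chainOfTableau lam nu T t i) ↔
      ((i, j) ∈ skewCells lam nu ∧ T (i, j) ≤ t) := by
  set s := ({p ∈ skewCells lam nu | p.1 = i ∧ T p ≤ t} : Finset _).image Prod.snd
  have hmem : ∀ j, j ∈ s ↔ (i, j) ∈ skewCells lam nu ∧ T (i, j) ≤ t := fun j => by
    simp only [s, mem_image, mem_filter]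
    constructor
    · rintro ⟨⟨i', j'⟩, ⟨hp, rfl, hT⟩, rfl⟩
      exact ⟨hp, hT⟩
    · exact fun h => ⟨(i, j), ⟨h.1, rfl, h.2⟩, rfl⟩
  have hcard : #s = #{p ∈ skewCells lam nu | p.1 = i ∧ T p ≤ t} :=
    card_image_of_injOn fun p hp q hq hpq =>
      Prod.ext ((mem_filter.mp hp).2.1.trans (mem_filter.mp hq).2.1.symm) hpq
  have hs : s = Ico (lam.rowLen i) (lam.rowLen i + #s) := by
    refine eq_Ico_of_downward_closed (fun x hx => (mem_skewCells_iff.mp ((hmem x).mp hx).1).1)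
      fun x hx y hy hyx => ?_
    obtain ⟨hx, hTx⟩ := (hmem x).mp hx
    have hy' : (i, y) ∈ skewCells lam nu := by
      rw [mem_skewCells_iff] at hx ⊢
      omega
    exact (hmem y).mpr ⟨hy', (hT.2.2.1 i y x hyx hy' hx).trans hTx⟩
  rw [← hmem, hs, mem_Ico, hcard, chainOfTableau]

theorem chainOfTableau_le (hT : IsLRTableau lam mu nu T) (t i : ℕ) :
    chainOfTableau lam nu T t i ≤ nu.rowLen i := by
  by_contra! h
  have hle := (YoungDiagram.le_iff_rowLen_le.mp hT.1 i)
  have := mem_skewCells_iff.mp ((lt_chainOfTableau_iff hT).mp ⟨hle, h⟩).1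
  omega

theorem chainOfTableau_zero (hT : IsLRTableau lam mu nu T) (i : ℕ) :
    chainOfTableau lam nu T 0 i = lam.rowLen i := by
  rw [chainOfTableau, add_eq_left, card_eq_zero, filter_eq_empty_iff]
  rintro p hp ⟨-, h0⟩
  have := (hT.2.1 p).mpr hp
  omega

theorem chainOfTableau_sub (t i : ℕ) :
    chainOfTableau lam nu T (t + 1) i - chainOfTableau lam nu T t i =
      #{p ∈ skewCells lam nu | p.1 = i ∧ T p = t + 1} := by
  have hsplit : #{p ∈ skewCells lam nu | p.1 = i ∧ T p ≤ t + 1} =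
      #{p ∈ skewCells lam nu | p.1 = i ∧ T p ≤ t} +
        #{p ∈ skewCells lam nu | p.1 = i ∧ T p = t + 1} := by
    rw [← card_union_of_disjoint (disjoint_filter.mpr fun p _ h h' => by omega), ← filter_or]
    exact congrArg card (filter_congr fun p _ => by omega)
  rw [chainOfTableau, chainOfTableau, hsplit]
  omega

theorem card_filter_eq_stripCount (t i : ℕ) :
    #{p ∈ skewCells lam nu | T p = t + 1 ∧ p.1 < i} =
      stripCount (chainOfTableau lam nu T) t i := by
  rw [card_filter_fst_lt]
  exact sum_congr rfl fun i' _ => (chainOfTableau_sub t i').symm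

theorem isLRChain_chainOfTableau (hT : IsLRTableau lam mu nu T) {N : ℕ}
    (hN : ∀ i, N ≤ i → nu.rowLen i = 0) :
    IsLRChain mu.rowLen N (chainOfTableau lam nu T) where
  le_succ t i := Nat.add_le_add_left (card_le_card fun p hp => by
    simp only [mem_filter] at hp ⊢
    exact ⟨hp.1, hp.2.1, by omega⟩) _
  horizontal t i := by
    by_contra! h
    set j := chainOfTableau lam nu T t i
    have hlam : lam.rowLen i ≤ j := Nat.le_add_right _ _
    obtain ⟨hlow, hT1⟩ := (lt_chainOfTableau_iff hT).mp
      ⟨(lam.rowLen_anti i (i + 1) i.le_succ).trans hlam, h⟩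
    have hup : (i, j) ∈ skewCells lam nu := by
      rw [mem_skewCells_iff] at hlow ⊢
      exact ⟨hlam, hlow.2.trans_le (nu.rowLen_anti i (i + 1) i.le_succ)⟩
    have := ((lt_chainOfTableau_iff hT).mpr
      ⟨hup, Nat.le_of_lt_succ ((hT.2.2.2.1 i (i + 1) j i.lt_succ_self hup hlow).trans_le hT1)⟩).2
    omega
  eq_zero t i hi := by
    have := chainOfTableau_le hT t i
    rw [hN i hi] at this
    omega
  stripCount_eq t := by
    rw [← card_filter_eq_stripCount, ← hT.2.2.2.2.1 t]
    refine congrArg card (filter_congr fun p hp => ?_)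
    have := (mem_skewCells_iff (i := p.1) (j := p.2)).mp hp
    have : p.1 < N := by
      by_contra! h
      rw [hN _ h] at this
      omega
    tauto
  lattice t i := by
    set j := chainOfTableau lam nu T (t + 1) i
    have hrow (p : ℕ × ℕ) (hp : p ∈ skewCells lam nu) (hpi : p.1 = i) :
        p.2 < j ↔ T p ≤ t + 1 := by
      obtain ⟨i, j'⟩ := p
      obtain rfl : i = _ := hpi
      simpa [hp, (mem_skewCells_iff.mp hp).1] using
        lt_chainOfTableau_iff hT (t := t + 1) (i := i) (j := j')
    have hnext : #{p ∈ skewCells lam nu | p.1 = i ∧ T p = t + 2 ∧ j ≤ p.2} =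
        #{p ∈ skewCells lam nu | p.1 = i ∧ T p = t + 1 + 1} :=
      congrArg card (filter_congr fun p hp => by
        have := hrow p hp
        constructor
        · rintro ⟨h1, h2, -⟩; exact ⟨h1, h2⟩
        · rintro ⟨h1, h2⟩; exact ⟨h1, h2, by omega⟩)
    have hcur : #{p ∈ skewCells lam nu | p.1 = i ∧ T p = t + 1 ∧ j ≤ p.2} = 0 :=
      card_eq_zero.mpr (filter_eq_empty_iff.mpr fun p hp ⟨h1, h2, h3⟩ => by
        have := hrow p hp h1
        omega)
    have key := hT.2.2.2.2.2 i j t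
    rw [card_filter_fst_lt_or_eq, card_filter_fst_lt_or_eq, hcur, hnext,
      card_filter_eq_stripCount, card_filter_eq_stripCount] at key
    rw [stripCount_succ, chainOfTableau_sub]
    omega

end ChainOfTableau

section TableauOfChain

open Classical in
noncomputable def tableauOfChain (g : ℕ → ℕ → ℕ) (p : ℕ × ℕ) : ℕ :=
  if h : ∃ t, p.2 < g t p.1 then Nat.find h else 0

variable {g : ℕ → ℕ → ℕ} {i j : ℕ}

theorem tableauOfChain_le {v : ℕ} (h : j < g v i) : tableauOfChain g (i, j) ≤ v := by
  classical
  rw [tableauOfChain, dif_pos ⟨v, h⟩]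
  exact Nat.find_le h

theorem lt_tableauOfChain (h : ∃ t, j < g t i) : j < g (tableauOfChain g (i, j)) i := by
  classical
  rw [tableauOfChain, dif_pos h]
  exact Nat.find_spec h

theorem tableauOfChain_eq_succ_iff (hg : Monotone (g · i)) {v : ℕ} :
    tableauOfChain g (i, j) = v + 1 ↔ g v i ≤ j ∧ j < g (v + 1) i := by
  classical
  by_cases h : ∃ t, j < g t i
  · rw [tableauOfChain, dif_pos h, Nat.find_eq_iff]
    exact and_comm.trans (and_congr_left' ⟨fun hm => not_lt.mp (hm v v.lt_succ_self),
      fun hv m hm => not_lt.mpr ((hg (Nat.le_of_lt_succ hm)).trans hv)⟩)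
  · push Not at h
    rw [tableauOfChain, dif_neg (by simpa using h)]
    have := h (v + 1)
    omega

theorem tableauOfChain_eq_zero_iff :
    tableauOfChain g (i, j) = 0 ↔ j < g 0 i ∨ ∀ t, g t i ≤ j := by
  classical
  by_cases h : ∃ t, j < g t i
  · rw [tableauOfChain, dif_pos h, Nat.find_eq_zero]
    simp only [not_lt.symm, ← not_exists]
    tauto
  · rw [tableauOfChain, dif_neg h]
    push Not at h
    simp [h]

variable {N : ℕ} {alpha beta delta : YoungDiagram}

theorem IsLRChain.exists_lt_iff (hg : IsLRChain beta.rowLen N g) :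
    (∃ t, j < g t i) ↔ j < g (beta.colLen 0) i :=
  ⟨fun ⟨t, ht⟩ =>
    ht.trans_le (hg.le_of_content_eq_zero (fun _ => rowLen_eq_zero_of_colLen_le) t i),
    fun h => ⟨_, h⟩⟩

theorem mem_skewCells_of_chain (hα : ∀ i, alpha.rowLen i = g 0 i)
    (hδ : ∀ i, delta.rowLen i = g (beta.colLen 0) i) :
    (i, j) ∈ skewCells alpha delta ↔ g 0 i ≤ j ∧ j < g (beta.colLen 0) i := by
  rw [mem_skewCells_iff, hα, hδ]

theorem card_row_tableauOfChain (hg : IsLRChain beta.rowLen N g)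
    (hα : ∀ i, alpha.rowLen i = g 0 i) (hδ : ∀ i, delta.rowLen i = g (beta.colLen 0) i)
    (i r : ℕ) :
    #{p ∈ skewCells alpha delta | p.1 = i ∧ tableauOfChain g p = r + 1} =
      g (r + 1) i - g r i := by
  have : {p ∈ skewCells alpha delta | p.1 = i ∧ tableauOfChain g p = r + 1} =
      (Ico (g r i) (g (r + 1) i)).map ⟨(i, ·), Prod.mk_right_injective i⟩ := by
    ext ⟨i', j⟩
    simp only [mem_filter, mem_map, mem_Ico, Function.Embedding.coeFn_mk, Prod.mk.injEq,
      mem_skewCells_of_chain hα hδ, tableauOfChain_eq_succ_iff (hg.monotone i')]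
    have h0 : g 0 i' ≤ g r i' := hg.monotone i' (Nat.zero_le r)
    have hM := hg.le_of_content_eq_zero (fun _ => rowLen_eq_zero_of_colLen_le) (r + 1) i'
    constructor
    · rintro ⟨-, rfl, h⟩
      exact ⟨j, h, rfl, rfl⟩
    · rintro ⟨j, h, rfl, rfl⟩
      exact ⟨⟨by omega, by omega⟩, rfl, h⟩
  rw [this, card_map, Nat.card_Ico]

theorem card_filter_tableauOfChain (hg : IsLRChain beta.rowLen N g)
    (hα : ∀ i, alpha.rowLen i = g 0 i) (hδ : ∀ i, delta.rowLen i = g (beta.colLen 0) i)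
    (r i : ℕ) :
    #{p ∈ skewCells alpha delta | tableauOfChain g p = r + 1 ∧ p.1 < i} = stripCount g r i := by
  rw [card_filter_fst_lt]
  exact sum_congr rfl fun i' _ => card_row_tableauOfChain hg hα hδ i' r

theorem isLRTableau_tableauOfChain (hg : IsLRChain beta.rowLen N g)
    (hα : ∀ i, alpha.rowLen i = g 0 i) (hδ : ∀ i, delta.rowLen i = g (beta.colLen 0) i) :
    IsLRTableau alpha beta delta (tableauOfChain g) := by
  have hmem := fun {i j : ℕ} => mem_skewCells_of_chain (i := i) (j := j) hα hδ
  have hsupp : ∀ p, 1 ≤ tableauOfChain g p ↔ p ∈ skewCells alpha delta := fun ⟨i, j⟩ => by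
    rw [hmem, Nat.one_le_iff_ne_zero, ne_eq, tableauOfChain_eq_zero_iff, ← hg.exists_lt_iff]
    push Not
    rfl
  refine ⟨YoungDiagram.le_iff_rowLen_le.mpr fun i => ?_, hsupp,
    fun i j j' hjj' _ hj' => ?_, fun i i' j hii' _ hj' => ?_, fun r => ?_, fun i j r => ?_⟩
  · rw [hα, hδ]
    exact hg.monotone i (Nat.zero_le _)
  · exact tableauOfChain_le (hjj'.trans_lt
      (lt_tableauOfChain (hg.exists_lt_iff.mpr (hmem.mp hj').2)))
  · obtain ⟨w, hw⟩ := Nat.exists_eq_add_of_le' ((hsupp _).mpr hj')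
    have hjw := (tableauOfChain_eq_succ_iff (hg.monotone i')).mp hw
    have hstep : g (w + 1) i' ≤ g w i := by
      obtain ⟨i'', rfl⟩ := Nat.exists_eq_add_of_lt hii'
      exact (hg.horizontal w (i + i'')).trans (hg.antitone w (Nat.le_add_right i i''))
    have := tableauOfChain_le (g := g) (hjw.2.trans_le hstep)
    omega
  · rw [← hg.stripCount_eq r, ← card_filter_tableauOfChain hg hα hδ]
    refine congrArg card (filter_congr fun ⟨i, j⟩ hp => ?_)
    have := (hmem.mp hp).2
    have : i < N := by
      by_contra! hi
      rw [hg.eq_zero _ _ hi] at this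
      omega
    tauto
  · have hrow :
        #{p ∈ skewCells alpha delta | p.1 = i ∧ tableauOfChain g p = r + 2 ∧ j ≤ p.2} ≤
          g (r + 2) i - g (r + 1) i :=
      (card_le_card fun p hp => by
        simp only [mem_filter] at hp ⊢
        exact ⟨hp.1, hp.2.1, hp.2.2.1⟩).trans
        (card_row_tableauOfChain hg hα hδ i (r + 1)).le
    rw [card_filter_fst_lt_or_eq, card_filter_fst_lt_or_eq, card_filter_tableauOfChain hg hα hδ,
      card_filter_tableauOfChain hg hα hδ]
    have : stripCount g (r + 1) i + (g (r + 2) i - g (r + 1) i) ≤ stripCount g r i :=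
      stripCount_succ g (r + 1) i ▸ hg.lattice r i
    omega

end TableauOfChain

section Slide

/-- Removing the cell at the end of row `a` of level `r` leaves a hole, which slides outward
through the higher levels (jeu de taquin): `holeRow f r a t` is its row at level `t ≥ r`. It
moves down a row exactly when the row below, at the next level, reaches under it. -/
def holeRow (f : ℕ → ℕ → ℕ) (r a : ℕ) : ℕ → ℕ
  | 0 => a
  | t + 1 => if r ≤ t ∧ f (t + 1) (holeRow f r a t + 1) = f t (holeRow f r a t)
      then holeRow f r a t + 1 else holeRow f r a t

def slide (f : ℕ → ℕ → ℕ) (r a t i : ℕ) : ℕ :=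
  f t i - if r ≤ t ∧ i = holeRow f r a t then 1 else 0

variable {c : ℕ → ℕ} {N : ℕ} {f : ℕ → ℕ → ℕ} {r a : ℕ}

theorem holeRow_of_le {t : ℕ} (ht : t ≤ r) : holeRow f r a t = a := by
  induction t with
  | zero => rfl
  | succ t ih => rw [holeRow, if_neg (by omega), ih (by omega)]

theorem holeRow_succ (hf : IsLRChain c N f) {t : ℕ} (ht : r ≤ t) :
    (holeRow f r a (t + 1) = holeRow f r a t + 1 ∧
        f (t + 1) (holeRow f r a t + 1) = f t (holeRow f r a t)) ∨
      (holeRow f r a (t + 1) = holeRow f r a t ∧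
        f (t + 1) (holeRow f r a t + 1) < f t (holeRow f r a t)) := by
  rw [holeRow]
  by_cases h : f (t + 1) (holeRow f r a t + 1) = f t (holeRow f r a t)
  · exact Or.inl ⟨if_pos ⟨ht, h⟩, h⟩
  · exact Or.inr ⟨if_neg (fun h' => h h'.2), lt_of_le_of_ne (hf.horizontal _ _) h⟩

theorem holeRow_corner (hf : IsLRChain c N f) (ha : f r (a + 1) < f r a) {t : ℕ}
    (ht : r ≤ t) : f t (holeRow f r a t + 1) < f t (holeRow f r a t) := by
  induction t, ht using Nat.le_induction with
  | base => rwa [holeRow_of_le le_rfl]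
  | succ t ht ih =>
    rcases holeRow_succ (a := a) hf ht with ⟨h1, h2⟩ | ⟨h1, h2⟩
    · rw [h1, h2]
      exact (hf.horizontal t _).trans_lt ih
    · rw [h1]
      exact h2.trans_le (hf.le_succ _ _)

theorem holeRow_lt (hf : IsLRChain c N f) (ha : f r (a + 1) < f r a) {t : ℕ} (ht : r ≤ t) :
    holeRow f r a t < N := by
  by_contra! h
  have := holeRow_corner hf ha ht
  rw [hf.eq_zero _ _ h] at this
  omega

theorem slide_of_lt {t : ℕ} (ht : t < r) (i : ℕ) : slide f r a t i = f t i := by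
  rw [slide, if_neg (by omega), Nat.sub_zero]

theorem slide_of_le {t : ℕ} (ht : r ≤ t) (i : ℕ) :
    slide f r a t i = f t i - if i = holeRow f r a t then 1 else 0 := by
  simp only [slide, ht, true_and]

theorem slide_le (t i : ℕ) : slide f r a t i ≤ f t i := Nat.sub_le _ _

theorem slide_le_succ (hf : IsLRChain c N f) (ha : f r (a + 1) < f r a)
    (hbase : ∀ s, r = s + 1 → f s a < f r a) (t i : ℕ) :
    slide f r a t i ≤ slide f r a (t + 1) i := by
  rcases lt_trichotomy (t + 1) r with ht | ht | ht
  · rw [slide_of_lt (by omega), slide_of_lt ht]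
    exact hf.le_succ t i
  · rw [slide_of_lt (by omega), slide_of_le ht.ge, holeRow_of_le ht.le]
    have := hbase t ht.symm
    have := hf.le_succ t i
    split_ifs with hi
    · subst hi; subst ht; omega
    · omega
  · have ht : r ≤ t := by omega
    have hc := holeRow_corner hf ha ht
    have hle := hf.le_succ t i
    rw [slide_of_le ht, slide_of_le (by omega)]
    rcases holeRow_succ (a := a) hf ht with ⟨h1, h2⟩ | ⟨h1, h2⟩ <;> rw [h1] <;>
      split_ifs <;> subst_vars <;> omega

theorem slide_horizontal (hf : IsLRChain c N f) (t i : ℕ) :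
    slide f r a (t + 1) (i + 1) ≤ slide f r a t i := by
  rcases lt_or_ge t r with ht | ht
  · rw [slide_of_lt ht]
    exact (slide_le _ _).trans (hf.horizontal t i)
  · have hh := hf.horizontal t i
    rw [slide_of_le ht, slide_of_le (by omega)]
    rcases holeRow_succ (a := a) hf ht with ⟨h1, h2⟩ | ⟨h1, h2⟩ <;> rw [h1] <;>
      split_ifs <;> subst_vars <;> omega

theorem slide_add_hole (hf : IsLRChain c N f) (ha : f r (a + 1) < f r a) (t i : ℕ) :
    slide f r a t i + (if r ≤ t ∧ i = holeRow f r a t then 1 else 0) = f t i := by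
  rw [slide]
  split_ifs with h
  · obtain ⟨ht, rfl⟩ := h
    have := holeRow_corner hf ha ht
    omega
  · rfl

theorem stripCount_slide_add (hf : IsLRChain c N f) (ha : f r (a + 1) < f r a)
    (hbase : ∀ s, r = s + 1 → f s a < f r a) (t i : ℕ) :
    stripCount (slide f r a) t i + (if r ≤ t + 1 ∧ holeRow f r a (t + 1) < i then 1 else 0) =
      stripCount f t i + (if r ≤ t ∧ holeRow f r a t < i then 1 else 0) := by
  induction i with
  | zero => simp [stripCount]
  | succ i ih =>
    have hmono := slide_le_succ hf ha hbase t i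
    have h0 := slide_add_hole hf ha t i
    have h1 := slide_add_hole hf ha (t + 1) i
    have hle := hf.le_succ t i
    rw [stripCount_succ, stripCount_succ]
    split_ifs at h0 h1 ih ⊢ <;> omega

theorem slide_lattice_of_le (hf : IsLRChain c N f) (ha : f r (a + 1) < f r a)
    (hbase : ∀ s, r = s + 1 → f s a < f r a) {t : ℕ} (ht : r ≤ t) (i : ℕ) :
    stripCount (slide f r a) (t + 1) (i + 1) ≤ stripCount (slide f r a) t i := by
  have F0 := stripCount_slide_add hf ha hbase t i
  have F1 := stripCount_slide_add hf ha hbase (t + 1) (i + 1)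
  have hlat := hf.lattice t i
  simp only [ht, show r ≤ t + 1 by omega, show r ≤ t + 1 + 1 by omega, true_and] at F0 F1
  rcases holeRow_succ (a := a) hf ht with ⟨h1, h2⟩ | ⟨h1, h2⟩ <;>
    rcases holeRow_succ (a := a) hf (show r ≤ t + 1 by omega) with ⟨h3, h4⟩ | ⟨h3, h4⟩ <;>
    rw [h1] at h3 h4 F0 F1 <;> rw [h3] at F1
  · split_ifs at F0 F1 <;> omega
  · split_ifs at F0 F1 <;> omega
  · by_cases hi : i = holeRow f r a t
    · -- the hole stays in row `i` at level `t + 1` and moves down at level `t + 2`: only here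
      -- the lattice condition of `f` is needed in its strict form
      subst hi
      have := hf.stripCount_succ_lt h4 h2
      split_ifs at F0 F1 <;> omega
    · split_ifs at F0 F1 <;> omega
  · split_ifs at F0 F1 <;> omega

theorem slide_lattice_base (hf : IsLRChain c N f) {s : ℕ}
    (ha : f (s + 1) (a + 1) < f (s + 1) a) (hbelow : f s a < f (s + 1) a)
    (hcol : ∀ i, a < i → f (s + 1) i = f s i) (hc : c (s + 1) < c s) (i : ℕ) :
    stripCount (slide f (s + 1) a) (s + 1) (i + 1) ≤ stripCount (slide f (s + 1) a) s i := by
  have hbase : ∀ s', s + 1 = s' + 1 → f s' a < f (s + 1) a := fun s' h => by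
    obtain rfl : s' = s := by omega
    exact hbelow
  have F0 := stripCount_slide_add hf ha hbase s i
  have F1 := stripCount_slide_add hf ha hbase (s + 1) (i + 1)
  have hlat := hf.lattice s i
  have hcs : ∀ i, a + 1 ≤ i → stripCount f s i = c s := fun i =>
    hf.stripCount_of_forall_eq fun j hj => hcol j hj
  simp only [le_refl, show ¬ s + 1 ≤ s by omega, show s + 1 ≤ s + 1 + 1 by omega, true_and,
    false_and, if_false, holeRow_of_le (le_refl (s + 1))] at F0 F1
  have hstep := holeRow_succ (a := a) hf (le_refl (s + 1))
  rw [holeRow_of_le (le_refl (s + 1))] at hstep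
  rcases lt_trichotomy i a with hi | rfl | hi
  · split_ifs at F0 F1 <;> omega
  · rcases hstep with ⟨h1, h2⟩ | ⟨h1, -⟩ <;> rw [h1] at F1
    · have := hf.stripCount_le (s + 1) (i + 1 + 1)
      have := hcs (i + 1) le_rfl
      have := stripCount_succ f (s + 1) (i + 1)
      have := stripCount_succ f s i
      have := hcol (i + 1) (by omega)
      have := hf.succ_le s i
      split_ifs at F0 F1 <;> omega
    · split_ifs at F0 F1 <;> omega
  · have := hf.stripCount_le (s + 1) (i + 1)
    have := hcs i hi
    have : holeRow f (s + 1) a (s + 1 + 1) ≤ a + 1 := by omega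
    split_ifs at F0 F1 <;> omega

theorem isLRChain_slide (hf : IsLRChain c N f) (ha : f r (a + 1) < f r a)
    (hbase : ∀ s, r = s + 1 → f s a < f r a ∧ (∀ i, a < i → f r i = f s i) ∧ c r < c s) :
    IsLRChain (fun t => if t + 1 = r then c t - 1 else c t) N (slide f r a) := by
  have hbelow : ∀ s, r = s + 1 → f s a < f r a := fun s hs => (hbase s hs).1
  refine ⟨slide_le_succ hf ha hbelow, slide_horizontal hf,
    fun t i hi => Nat.eq_zero_of_le_zero (hf.eq_zero t i hi ▸ slide_le t i),
    fun t => ?_, fun t i => ?_⟩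
  · have F := stripCount_slide_add hf ha hbelow t N
    have := hf.stripCount_eq t
    have := holeRow_lt (a := a) hf ha (t := t)
    have := holeRow_lt (a := a) hf ha (t := t + 1)
    rcases lt_trichotomy (t + 1) r with ht | ht | ht
    · split_ifs at F ⊢ <;> omega
    · obtain ⟨-, -, hc⟩ := hbase t ht.symm
      split_ifs at F ⊢ <;> omega
    · split_ifs at F ⊢ <;> omega
  · rcases lt_trichotomy (t + 1) r with ht | rfl | ht
    · have F0 := stripCount_slide_add hf ha hbelow t i
      have F1 := stripCount_slide_add hf ha hbelow (t + 1) (i + 1)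
      have := hf.lattice t i
      split_ifs at F0 F1 <;> omega
    · obtain ⟨hlt, hcol, hc⟩ := hbase t rfl
      exact slide_lattice_base hf ha hlt hcol hc i
    · exact slide_lattice_of_le hf ha hbelow (by omega) i

end Slide

section Reduction

theorem exists_last_lt {u v : ℕ → ℕ} {N : ℕ} (h : ∃ i, u i < v i)
    (hN : ∀ i, N ≤ i → v i ≤ u i) : ∃ a, u a < v a ∧ ∀ i, a < i → v i ≤ u i := by
  obtain ⟨i, hi⟩ := h
  have hiN : i ≤ N := by
    by_contra! h
    have := hN i h.le
    omega
  let P i := u i < v i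
  refine ⟨Nat.findGreatest P N, Nat.findGreatest_spec (P := P) hiN hi, fun j hj => ?_⟩
  rcases le_or_gt j N with hjN | hjN
  · exact not_lt.mp (Nat.findGreatest_is_greatest (P := P) hj hjN)
  · exact hN j hjN.le

theorem sum_sub_ite_add_one {v : ℕ → ℕ} {a N : ℕ} (ha : a < N) (hv : 0 < v a) :
    ∑ i ∈ range N, (v i - if i = a then 1 else 0) + 1 = ∑ i ∈ range N, v i := by
  have hrest : ∑ i ∈ (range N).erase a, (v i - if i = a then 1 else 0) =
      ∑ i ∈ (range N).erase a, v i :=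
    sum_congr rfl fun i hi => by rw [if_neg (ne_of_mem_erase hi), Nat.sub_zero]
  rw [← add_sum_erase _ _ (mem_range.mpr ha), ← add_sum_erase _ _ (mem_range.mpr ha), hrest,
    if_pos rfl]
  omega

variable {c : ℕ → ℕ} {N : ℕ} {f : ℕ → ℕ → ℕ}

namespace IsLRChain

theorem exists_remove_inner (hf : IsLRChain c N f) {a : ℕ} (ha : f 0 (a + 1) < f 0 a) :
    ∃ g, IsLRChain c N g ∧ (∀ t i, g t i ≤ f t i) ∧
      ∀ i, g 0 i = f 0 i - if i = a then 1 else 0 := by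
  have hg := isLRChain_slide hf ha fun s hs => by omega
  simp only [Nat.add_one_ne_zero, if_false] at hg
  exact ⟨slide f 0 a, hg, slide_le, fun i => by rw [slide_of_le le_rfl, holeRow_of_le le_rfl]⟩

theorem exists_remove_content (hf : IsLRChain c N f) {s : ℕ} (hc : c (s + 1) < c s) :
    ∃ g, IsLRChain (fun t => c t - if t = s then 1 else 0) N g ∧ (∀ t i, g t i ≤ f t i) ∧
      ∀ i, g 0 i = f 0 i := by
  have hstrip : ∃ i, f s i < f (s + 1) i := by
    by_contra! h
    have : stripCount f s N = 0 := sum_eq_zero fun i _ => Nat.sub_eq_zero_of_le (h i)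
    rw [hf.stripCount_eq] at this
    omega
  obtain ⟨a, hsa, hlast⟩ := exists_last_lt hstrip fun i hi => by rw [hf.eq_zero _ _ hi]; simp
  have hcol : ∀ i, a < i → f (s + 1) i = f s i := fun i hi =>
    le_antisymm (hlast i hi) (hf.le_succ s i)
  have ha : f (s + 1) (a + 1) < f (s + 1) a := by
    rw [hcol _ a.lt_succ_self]
    exact (hf.succ_le s a).trans_lt hsa
  have hg := isLRChain_slide hf ha fun s' hs' => by
    obtain rfl : s' = s := by omega
    exact ⟨hsa, hcol, hc⟩
  have hcont : (fun t => if t + 1 = s + 1 then c t - 1 else c t) =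
      fun t => c t - if t = s then 1 else 0 := by
    funext t
    by_cases h : t = s <;> simp [h]
  rw [hcont] at hg
  exact ⟨slide f (s + 1) a, hg, slide_le, slide_of_lt s.succ_pos⟩

theorem exists_le_inner (hf : IsLRChain c N f) {u : ℕ → ℕ} (hu : Antitone u)
    (huf : ∀ i, u i ≤ f 0 i) :
    ∃ g, IsLRChain c N g ∧ (∀ i, g 0 i = u i) ∧ ∀ t i, g t i ≤ f t i := by
  induction h : ∑ i ∈ range N, f 0 i using Nat.strong_induction_on generalizing f with
  | _ n ih =>
  by_cases hinner : ∃ i, u i < f 0 i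
  · obtain ⟨a, hua, hlast⟩ := exists_last_lt hinner fun i hi => by rw [hf.eq_zero 0 i hi]; simp
    have haN : a < N := by
      by_contra! haN
      rw [hf.eq_zero 0 a haN] at hua
      omega
    have ha : f 0 (a + 1) < f 0 a :=
      (hlast _ a.lt_succ_self).trans_lt ((hu a.le_succ).trans_lt hua)
    obtain ⟨g', hg', hg'f, hg'0⟩ := hf.exists_remove_inner ha
    have hsum := sum_sub_ite_add_one haN (v := f 0) (by omega)
    have hlt : ∑ i ∈ range N, g' 0 i < n := by
      simp only [hg'0]
      omega
    have hug' : ∀ i, u i ≤ g' 0 i := fun i => by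
      rw [hg'0]
      split_ifs with hi
      · subst hi
        omega
      · exact huf i
    obtain ⟨g, hg, hg0, hgg'⟩ := ih _ hlt hg' hug' rfl
    exact ⟨g, hg, hg0, fun t i => (hgg' t i).trans (hg'f t i)⟩
  · exact ⟨f, hf, fun i => le_antisymm (not_lt.mp fun h => hinner ⟨i, h⟩) (huf i),
      fun _ _ => le_rfl⟩

theorem exists_le_content (hf : IsLRChain c N f) {d : ℕ → ℕ} (hd : Antitone d)
    (hdc : ∀ t, d t ≤ c t) (hc : ∀ t, N ≤ t → c t = 0) :
    ∃ g, IsLRChain d N g ∧ (∀ i, g 0 i = f 0 i) ∧ ∀ t i, g t i ≤ f t i := by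
  induction h : ∑ t ∈ range N, c t using Nat.strong_induction_on generalizing c f with
  | _ n ih =>
  by_cases hcontent : ∃ t, d t < c t
  · obtain ⟨s, hds, hlast⟩ := exists_last_lt hcontent fun t ht => by rw [hc t ht]; simp
    have hsN : s < N := by
      by_contra! hsN
      rw [hc s hsN] at hds
      omega
    have hs : c (s + 1) < c s := (hlast _ s.lt_succ_self).trans_lt ((hd s.le_succ).trans_lt hds)
    obtain ⟨g', hg', hg'f, hg'0⟩ := hf.exists_remove_content hs
    have hsum := sum_sub_ite_add_one hsN (v := c) (by omega)
    have hdc' : ∀ t, d t ≤ c t - if t = s then 1 else 0 := fun t => by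
      split_ifs with ht
      · subst ht
        omega
      · simpa using hdc t
    obtain ⟨g, hg, hg0, hgg'⟩ := ih _ (by omega) hg' hdc' (fun t ht => by rw [hc t ht]; simp) rfl
    exact ⟨g, hg, fun i => (hg0 i).trans (hg'0 i), fun t i => (hgg' t i).trans (hg'f t i)⟩
  · have hcd : c = d := funext fun t => le_antisymm (not_lt.mp fun h => hcontent ⟨t, h⟩) (hdc t)
    exact ⟨f, hcd ▸ hf, fun _ => rfl, fun _ _ => le_rfl⟩

end IsLRChain

end Reduction

theorem exists_lrCoeff_ne_zero_le {alpha beta lam mu gamma : YoungDiagram} (hα : alpha ≤ lam)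
    (hβ : beta ≤ mu) (h : lrCoeff lam mu gamma ≠ 0) :
    ∃ delta ≤ gamma, lrCoeff alpha beta delta ≠ 0 := by
  obtain ⟨T, hT⟩ := lrCoeff_ne_zero_iff.mp h
  have hf := isLRChain_chainOfTableau hT (N := max (gamma.colLen 0) (mu.colLen 0))
    fun i hi => rowLen_eq_zero_of_colLen_le (le_of_max_le_left hi)
  obtain ⟨g', hg', hg'0, hg'f⟩ := hf.exists_le_content (d := beta.rowLen)
    (fun i j => beta.rowLen_anti i j) (YoungDiagram.le_iff_rowLen_le.mp hβ)
    fun t ht => rowLen_eq_zero_of_colLen_le (le_of_max_le_right ht)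
  obtain ⟨g, hg, hg0, hgg'⟩ := hg'.exists_le_inner (u := alpha.rowLen)
    (fun i j => alpha.rowLen_anti i j)
    fun i => hg'0 i ▸ chainOfTableau_zero hT i ▸ YoungDiagram.le_iff_rowLen_le.mp hα i
  obtain ⟨delta, hδ⟩ := exists_rowLen_eq (hg.antitone (beta.colLen 0)) (hg.eq_zero _)
  refine ⟨delta, YoungDiagram.le_iff_rowLen_le.mpr fun i => ?_,
    lrCoeff_ne_zero_iff.mpr ⟨_, isLRTableau_tableauOfChain hg (fun i => (hg0 i).symm) hδ⟩⟩
  rw [hδ]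
  exact ((hgg' _ i).trans (hg'f _ i)).trans (chainOfTableau_le hT _ i)

theorem kappa_monotone_general (l k : ℕ) (α β lam mu : YoungDiagram)
    (hαl : α ≤ lam) (hβm : β ≤ mu) :
    ∀ p : ℕ × ℕ, p ∈ (rect l k).cells →
      (∀ δ, δ ≤ rect l k → lrCoeff α β δ ≠ 0 → p ∈ δ.cells) →
      (∀ γ, γ ≤ rect l k → lrCoeff lam mu γ ≠ 0 → p ∈ γ.cells) := by
  intro p _ hκ γ hγ hcγ
  obtain ⟨δ, hδγ, hδ⟩ := exists_lrCoeff_ne_zero_le hαl hβm hcγ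
  exact cells_subset_iff.mpr hδγ (hκ δ (hδγ.trans hγ) hδ)

/-- If `α ⊆ lam ⊆ l × k` and `β ⊆ mu ⊆ l × k`, then `κ(α,β) ⊆ κ(lam,mu)`,
where `κ(ρ,τ)` is the intersection of all `γ ⊆ l × k` with `c^γ_{ρ,τ} ≠ 0` (equal to
`l × k` by convention when no such `γ` exists).  Membership of a box `p` in `κ(ρ,τ)` is
expressed as: `p ∈ l × k` and `p` belongs to every `γ ⊆ l × k` with `c^γ_{ρ,τ} ≠ 0`. -/
theorem kappa_monotone (l k : ℕ) (α β lam mu : YoungDiagram)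
    (hαl : α ≤ lam) (hβm : β ≤ mu) (hlam : lam ≤ rect l k) (hmu : mu ≤ rect l k) :
    ∀ p : ℕ × ℕ, p ∈ (rect l k).cells →
      (∀ δ, δ ≤ rect l k → lrCoeff α β δ ≠ 0 → p ∈ δ.cells) →
      (∀ γ, γ ≤ rect l k → lrCoeff lam mu γ ≠ 0 → p ∈ γ.cells) :=
  kappa_monotone_general l k α β lam mu hαl hβm

end QCGrass
end

section
/- In the quantum cohomology ring QH*(Gr(l,l+k)) with n = l+k, the quantum product of the Schubert classes of the two rectangles (d^l) (l rows of length d) and (k^d) (d rows of length k), for 0 ≤ d ≤ min(l,k), equals q^d times the identity class: σ_{(d^l)} * σ_{(k^d)} = q^d. -/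
open YoungDiagram

namespace QCGrass

/-!
An LR tableau of shape `ρ / (d^l)` with content `(k^d)` has entries `≤ d`, strictly increasing
down columns, so no column of `ρ / (d^l)` has more than `d` cells. Together with `ρ₁ ≤ k` and
`|ρ| = ld + dk` this forces `ρ = (k^d, d^l)`; its skew shape consists of two rectangles with `d`
rows each, which must be filled row by row, so `c^ρ = 1`.

On the abacus with `d + l` beads, `ρ` has beads at `n, …, n + d - 1` and `d, …, d + l - 1`
(`n = l + k`), and removing an `n`-rim hook moves a bead from `b` to the empty position `b - n`.
Only the top `d` beads can move, the bead `t + n` to `t`, so every maximal sequence removes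
exactly `d` hooks and ends with the beads at `0, …, d + l - 1`, i.e. at the empty diagram.
When the bead `t + n` moves after the beads of `A` have moved, `k - width` of the hook is
congruent to `t + |A|` mod 2; over the `d` moves these add up to `2 (0 + 1 + ⋯ + (d - 1))`,
so the sign is `+1`.
-/

open Finset

section YoungDiagramBasics

variable {lam mu : YoungDiagram}

lemma rowLen_eq_of_forall_mem_iff {i n : ℕ} (h : ∀ j, (i, j) ∈ lam ↔ j < n) :
    lam.rowLen i = n :=
  eq_of_forall_lt_iff fun j => by rw [← mem_iff_lt_rowLen, h]

lemma le_iff_forall_rowLen_le : mu ≤ lam ↔ ∀ i, mu.rowLen i ≤ lam.rowLen i := by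
  refine ⟨fun h i => ?_, fun h ⟨i, j⟩ hp => ?_⟩
  · by_contra! hlt
    exact (mem_iff_lt_rowLen.1 (h (mem_iff_lt_rowLen.2 hlt))).false
  · exact mem_iff_lt_rowLen.2 ((mem_iff_lt_rowLen.1 hp).trans_le (h i))

lemma rowLen_eq_zero_iff_colLen_le {i : ℕ} : lam.rowLen i = 0 ↔ lam.colLen 0 ≤ i := by
  rw [← not_lt, ← mem_iff_lt_colLen, mem_iff_lt_rowLen]
  omega

lemma eq_bot_iff_rowLen_zero_eq_zero : lam = ⊥ ↔ lam.rowLen 0 = 0 := by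
  refine ⟨fun h => h ▸ rowLen_eq_of_forall_mem_iff fun j => by simp [YoungDiagram.notMem_bot],
    fun h => ?_⟩
  ext ⟨i, j⟩
  simp only [YoungDiagram.cells_bot, notMem_empty, iff_false, mem_cells, mem_iff_lt_rowLen]
  have := lam.rowLen_anti 0 i (Nat.zero_le i)
  omega

lemma colLen_le_colLen (h : mu ≤ lam) (j : ℕ) : mu.colLen j ≤ lam.colLen j := by
  by_contra! hlt
  exact (mem_iff_lt_colLen.1 (h (mem_iff_lt_colLen.2 hlt))).false

end YoungDiagramBasics

lemma card_cells_eq_sum_rowLen (lam : YoungDiagram) {N : ℕ} (hN : lam.colLen 0 ≤ N) :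
    lam.cells.card = ∑ i ∈ range N, lam.rowLen i := by
  rw [card_eq_sum_card_fiberwise (f := Prod.fst) (t := range N) fun p hp => ?_]
  · exact sum_congr rfl fun i _ => by rw [lam.rowLen_eq_card]; rfl
  · have := mem_iff_lt_colLen.1
      (lam.up_left_mem le_rfl (Nat.zero_le p.2) (mem_cells _ |>.1 hp))
    exact mem_range.2 (by omega)

lemma mem_rect {m M i j : ℕ} : (i, j) ∈ rect m M ↔ i < m ∧ j < M := by
  simp [← mem_cells, rect]

lemma rowLen_rect (m M i : ℕ) : (rect m M).rowLen i = if i < m then M else 0 :=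
  rowLen_eq_of_forall_mem_iff fun j => by rw [mem_rect]; split_ifs <;> omega

lemma colLen_rect {m M : ℕ} (hM : 0 < M) : (rect m M).colLen 0 = m :=
  eq_of_forall_lt_iff fun i => by rw [← mem_iff_lt_colLen, mem_rect]; omega

lemma card_cells_rect (m M : ℕ) : (rect m M).cells.card = m * M := by
  simp [rect]

section SkewCells

variable {lam mu : YoungDiagram}

lemma mem_skewCells {i j : ℕ} :
    (i, j) ∈ skewCells mu lam ↔ mu.rowLen i ≤ j ∧ j < lam.rowLen i := by
  rw [skewCells, mem_sdiff, mem_cells, mem_cells,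
    mem_iff_lt_rowLen, mem_iff_lt_rowLen, not_lt, and_comm]

lemma card_skewCells_row (i : ℕ) :
    ((skewCells mu lam).filter (·.1 = i)).card = lam.rowLen i - mu.rowLen i := by
  have : (skewCells mu lam).filter (·.1 = i) = {i} ×ˢ Ico (mu.rowLen i) (lam.rowLen i) := by
    ext ⟨a, b⟩
    simp only [mem_filter, mem_product, mem_singleton, mem_Ico]
    constructor
    · rintro ⟨hm, rfl⟩
      exact ⟨rfl, mem_skewCells.1 hm⟩
    · rintro ⟨rfl, hb⟩
      exact ⟨mem_skewCells.2 hb, rfl⟩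
  rw [this, card_product, card_singleton, Nat.card_Ico, one_mul]

lemma card_skewCells_eq_sum {r1 r2 : ℕ}
    (hrows : ∀ p ∈ skewCells mu lam, r1 ≤ p.1 ∧ p.1 ≤ r2) :
    (skewCells mu lam).card = ∑ i ∈ Icc r1 r2, (lam.rowLen i - mu.rowLen i) := by
  rw [card_eq_sum_card_fiberwise (f := Prod.fst) fun p hp => mem_Icc.2 (hrows p hp)]
  exact sum_congr rfl fun i _ => card_skewCells_row i

lemma card_cells_eq_add_card_skewCells (h : mu ≤ lam) :
    lam.cells.card = mu.cells.card + (skewCells mu lam).card := by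
  rw [skewCells, card_sdiff_of_subset (cells_subset_iff.2 h),
    Nat.add_sub_cancel' (card_le_card (cells_subset_iff.2 h))]

end SkewCells

def truncate (lam : YoungDiagram) (f : ℕ → ℕ) (hf : Antitone f) : YoungDiagram where
  cells := lam.cells.filter fun p => p.2 < f p.1
  isLowerSet a b hab ha := by
    simp only [coe_filter, mem_cells, Set.mem_ofPred_eq] at ha ⊢
    exact ⟨lam.isLowerSet hab ha.1, (Prod.mk_le_mk.1 hab).2.trans_lt (ha.2.trans_le
      (hf (Prod.mk_le_mk.1 hab).1))⟩

lemma rowLen_truncate {lam : YoungDiagram} {f : ℕ → ℕ} (hf : Antitone f) (i : ℕ) :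
    (truncate lam f hf).rowLen i = min (lam.rowLen i) (f i) :=
  rowLen_eq_of_forall_mem_iff fun j => by
    rw [← mem_cells]
    simp only [truncate, mem_filter, mem_cells, mem_iff_lt_rowLen, lt_min_iff]

/-- `lam / mu` is a border strip occupying the rows `r1, …, r2`: consecutive rows of the strip
overlap in exactly one column. -/
structure IsBorderStrip (lam mu : YoungDiagram) (r1 r2 : ℕ) : Prop where
  rows_le : r1 ≤ r2
  rowLen_eq : ∀ i, i < r1 ∨ r2 < i → mu.rowLen i = lam.rowLen i
  rowLen_succ : ∀ i, r1 ≤ i → i < r2 → mu.rowLen i + 1 = lam.rowLen (i + 1)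
  rowLen_lt : mu.rowLen r2 < lam.rowLen r2

namespace IsBorderStrip

variable {lam mu : YoungDiagram} {r1 r2 : ℕ}

lemma rowLen_le (h : IsBorderStrip lam mu r1 r2) (i : ℕ) : mu.rowLen i ≤ lam.rowLen i := by
  rcases lt_or_ge i r1 with hi | hi
  · exact (h.rowLen_eq i (.inl hi)).le
  rcases lt_trichotomy i r2 with hi' | rfl | hi'
  · have := h.rowLen_succ i hi hi'
    have := lam.rowLen_anti i (i + 1) (by omega)
    omega
  · exact h.rowLen_lt.le
  · exact (h.rowLen_eq i (.inr hi')).le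

lemma le (h : IsBorderStrip lam mu r1 r2) : mu ≤ lam :=
  le_iff_forall_rowLen_le.2 h.rowLen_le

lemma rows_of_mem (h : IsBorderStrip lam mu r1 r2) {p : ℕ × ℕ} (hp : p ∈ skewCells mu lam) :
    r1 ≤ p.1 ∧ p.1 ≤ r2 := by
  rw [← Prod.mk.eta (p := p), mem_skewCells] at hp
  by_contra hout
  have := h.rowLen_eq p.1 (by omega)
  omega

lemma card_skewCells (h : IsBorderStrip lam mu r1 r2) :
    (skewCells mu lam).card + mu.rowLen r2 = lam.rowLen r1 + (r2 - r1) := by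
  rw [card_skewCells_eq_sum fun p hp => h.rows_of_mem hp]
  have telescope : ∀ r, r1 ≤ r → r ≤ r2 →
      ∑ i ∈ Icc r1 r, (lam.rowLen i - mu.rowLen i) + mu.rowLen r =
        lam.rowLen r1 + (r - r1) := by
    intro r hr
    induction r, hr using Nat.le_induction with
    | base => simp only [Icc_self, sum_singleton]; have := h.rowLen_le r1; omega
    | succ r hr ih =>
      intro hr2
      rw [sum_Icc_succ_top (by omega)]
      have := ih (by omega)
      have := h.rowLen_succ r hr (by omega)
      have := h.rowLen_le (r + 1)
      omega
  exact telescope r2 h.rows_le le_rfl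

lemma hookWidth_eq (h : IsBorderStrip lam mu r1 r2) :
    hookWidth lam mu = lam.rowLen r1 - mu.rowLen r2 := by
  have hcols : (skewCells mu lam).image Prod.snd = Ico (mu.rowLen r2) (lam.rowLen r1) := by
    ext j
    simp only [mem_image, mem_Ico]
    constructor
    · rintro ⟨⟨i, j⟩, hp, rfl⟩
      obtain ⟨h1, h2⟩ := h.rows_of_mem hp
      rw [mem_skewCells] at hp
      have := lam.rowLen_anti r1 i h1
      have := mu.rowLen_anti i r2 h2
      omega
    · rintro ⟨hj1, hj2⟩
      -- the lowest row of the strip reaching column `j`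
      set i := Nat.findGreatest (fun i => j < lam.rowLen i) r2
      have hr1i : r1 ≤ i := Nat.le_findGreatest h.rows_le hj2
      have hi : j < lam.rowLen i := Nat.findGreatest_spec (P := fun i => j < lam.rowLen i)
        h.rows_le hj2
      refine ⟨(i, j), mem_skewCells.2 ⟨?_, hi⟩, rfl⟩
      rcases (Nat.findGreatest_le r2 : i ≤ r2).lt_or_eq with hlt | hi
      · have := Nat.findGreatest_is_greatest (lt_add_one i) hlt
        have := h.rowLen_succ i hr1i hlt
        omega
      · rwa [show i = r2 from hi]
  rw [hookWidth, hcols, Nat.card_Ico]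

lemma isRimHookRemoval (h : IsBorderStrip lam mu r1 r2) :
    IsRimHookRemoval (skewCells mu lam).card lam mu := by
  set S := skewCells mu lam
  set R : ℕ × ℕ → ℕ × ℕ → Prop := fun a b => a ∈ S ∧ b ∈ S ∧ Adjacent a b
  have hR : Std.Symm R :=
    ⟨fun a b ⟨ha, hb, hab⟩ => ⟨hb, ha, by unfold Adjacent at *; omega⟩⟩
  have to_start : ∀ i j, (i, j) ∈ S → Relation.ReflTransGen R (i, j) (i, mu.rowLen i) := by
    intro i j hij
    obtain ⟨s, rfl⟩ := Nat.exists_eq_add_of_le (mem_skewCells.1 hij).1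
    induction s with
    | zero => rfl
    | succ s ih =>
      have hmem : (i, mu.rowLen i + s) ∈ S := by rw [mem_skewCells] at hij ⊢; omega
      exact .head ⟨hij, hmem, .inl ⟨rfl, .inl (by omega)⟩⟩ (ih hmem)
  -- every cell is joined to the last cell `(r2, mu.rowLen r2)` of the strip
  have down : ∀ i, i ≤ r2 → r1 ≤ i →
      Relation.ReflTransGen R (i, mu.rowLen i) (r2, mu.rowLen r2) := by
    intro i hi
    induction hi using Nat.decreasingInduction with
    | self => intro; rfl
    | of_succ i hi ih =>
      intro hi1
      have hstep := h.rowLen_succ i hi1 hi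
      have := lam.rowLen_anti i (i + 1) (by omega)
      have := mu.rowLen_anti i (i + 1) (by omega)
      have hmem : (i, mu.rowLen i) ∈ S := mem_skewCells.2 (by omega)
      have hmem' : (i + 1, mu.rowLen i) ∈ S := mem_skewCells.2 (by omega)
      exact .head ⟨hmem, hmem', .inr ⟨rfl, .inr rfl⟩⟩
        ((to_start _ _ hmem').trans (ih (by omega)))
  have to_end : ∀ p ∈ S, Relation.ReflTransGen R p (r2, mu.rowLen r2) := by
    rintro ⟨i, j⟩ hp
    obtain ⟨hi1, hi2⟩ := h.rows_of_mem hp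
    exact (to_start i j hp).trans (down i hi2 hi1)
  refine ⟨h.le, rfl, fun p hp q hq => (to_end p hp).trans
    (Relation.ReflTransGen.stdSymm.symm _ _ (to_end q hq)), ?_⟩
  rintro ⟨i, j, h00, -, -, h11⟩
  have := h.rows_of_mem h11
  have := h.rowLen_succ i (h.rows_of_mem h00).1 (by simp only at this; omega)
  rw [mem_skewCells] at h00 h11
  omega

end IsBorderStrip

lemma exists_isBorderStrip_rowLen_eq {lam : YoungDiagram} {r1 r2 m : ℕ} (h12 : r1 ≤ r2)
    (hlt : m < lam.rowLen r2) (hge : lam.rowLen (r2 + 1) ≤ m) :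
    ∃ mu, IsBorderStrip lam mu r1 r2 ∧ mu.rowLen r2 = m := by
  have hpos : ∀ i, i < r2 → 0 < lam.rowLen (i + 1) := fun i hi => by
    have := lam.rowLen_anti (i + 1) r2 hi
    omega
  set f : ℕ → ℕ := fun i =>
    if r1 ≤ i ∧ i < r2 then lam.rowLen (i + 1) - 1 else if i = r2 then m else lam.rowLen i
  have hfr2 : f r2 = m := by simp [f]
  have hf : Antitone f := antitone_nat_of_succ_le fun i => by
    have := lam.rowLen_anti i (i + 1) (Nat.le_succ i)
    have := lam.rowLen_anti (i + 1) (i + 1 + 1) (Nat.le_succ _)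
    simp only [f]
    split_ifs <;> subst_vars <;> omega
  have hrow : ∀ i, (truncate lam f hf).rowLen i = f i := fun i => by
    rw [rowLen_truncate]
    have := lam.rowLen_anti i (i + 1) (Nat.le_succ i)
    simp only [f]
    split_ifs <;> subst_vars <;> omega
  refine ⟨truncate lam f hf, ⟨h12, fun i hi => ?_, fun i hi1 hi2 => ?_, by rwa [hrow, hfr2]⟩,
    by rw [hrow, hfr2]⟩ <;> simp only [hrow, f]
  · split_ifs <;> omega
  · have := hpos i hi2
    split_ifs <;> omega

lemma exists_vertical_edge_of_reflTransGen {S : Finset (ℕ × ℕ)} {p q : ℕ × ℕ} {i : ℕ}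
    (h : Relation.ReflTransGen (fun a b => a ∈ S ∧ b ∈ S ∧ Adjacent a b) p q)
    (hp : p.1 ≤ i) (hq : i < q.1) : ∃ c, (i, c) ∈ S ∧ (i + 1, c) ∈ S := by
  induction h using Relation.ReflTransGen.head_induction_on with
  | refl => omega
  | @head a b hab _ ih =>
    by_cases hb : b.1 ≤ i
    · exact ih hb
    · obtain ⟨ha, hb', hadj | ⟨hcol, hrow⟩⟩ := hab
      · omega
      · refine ⟨a.2, ?_, ?_⟩
        · rwa [show i = a.1 by omega]
        · rwa [hcol, show i + 1 = b.1 by omega]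

lemma IsRimHookRemoval.exists_isBorderStrip {n : ℕ} {lam mu : YoungDiagram} (hn : n ≠ 0)
    (h : IsRimHookRemoval n lam mu) : ∃ r1 r2, IsBorderStrip lam mu r1 r2 := by
  obtain ⟨hle, hcard, hconn, hsquare⟩ := h
  set S := skewCells mu lam
  have hrows : (S.image Prod.fst).Nonempty := by
    rw [image_nonempty, ← card_pos]
    omega
  obtain ⟨p1, hp1, hr1⟩ := mem_image.1 ((S.image Prod.fst).min'_mem hrows)
  obtain ⟨p2, hp2, hr2⟩ := mem_image.1 ((S.image Prod.fst).max'_mem hrows)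
  have hbounds : ∀ p ∈ S, p1.1 ≤ p.1 ∧ p.1 ≤ p2.1 := fun p hp =>
    ⟨hr1 ▸ min'_le _ _ (mem_image_of_mem _ hp), hr2 ▸ le_max' _ _ (mem_image_of_mem _ hp)⟩
  have hrowle := le_iff_forall_rowLen_le.1 hle
  refine ⟨p1.1, p2.1, (hbounds p2 hp2).1, fun i hi => ?_, fun i hi1 hi2 => ?_, ?_⟩
  · by_contra hne
    have := hbounds (i, mu.rowLen i) (mem_skewCells.2 (by have := hrowle i; omega))
    omega
  · obtain ⟨c, hc, hc'⟩ :=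
      exists_vertical_edge_of_reflTransGen (hconn p1 hp1 p2 hp2) hi1 hi2
    rw [mem_skewCells] at hc hc'
    have := lam.rowLen_anti i (i + 1) (by omega)
    have := mu.rowLen_anti i (i + 1) (by omega)
    by_contra hne
    -- otherwise the strip would contain the square with corner `(i, mu.rowLen i)`
    exact hsquare ⟨i, mu.rowLen i, by simp only [S, mem_skewCells]; omega⟩
  · have := mem_skewCells.1 (Prod.mk.eta (p := p2) ▸ hp2)
    omega

/-- The `i`-th beta number of `lam` on an abacus with `N` beads (row `i` counted from the top). -/
def betaFn (N : ℕ) (lam : YoungDiagram) (i : ℕ) : ℕ := lam.rowLen i + (N - 1 - i)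

def betaSet (N : ℕ) (lam : YoungDiagram) : Finset ℕ := (range N).image (betaFn N lam)

section Beta

variable {N : ℕ} {lam mu : YoungDiagram}

lemma betaFn_add_le {i i' : ℕ} (h : i ≤ i') (h' : i' < N) :
    betaFn N lam i' + (i' - i) ≤ betaFn N lam i := by
  have := lam.rowLen_anti i i' h
  unfold betaFn
  omega

lemma betaFn_lt_betaFn {i i' : ℕ} (h : i < i') (h' : i' < N) :
    betaFn N lam i' < betaFn N lam i := by
  have := betaFn_add_le (lam := lam) h.le h'
  omega

lemma betaFn_injOn : Set.InjOn (betaFn N lam) (Set.Iio N) := by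
  intro i hi i' hi' h
  by_contra hne
  rcases Nat.lt_or_gt_of_ne hne with hlt | hlt
  · exact (betaFn_lt_betaFn hlt hi').ne h.symm
  · exact (betaFn_lt_betaFn hlt hi).ne h

lemma mem_betaSet {x : ℕ} : x ∈ betaSet N lam ↔ ∃ i < N, betaFn N lam i = x := by
  simp [betaSet]

lemma eq_bot_of_betaSet_eq_range (hN : lam.colLen 0 ≤ N) (h : betaSet N lam = range N) :
    lam = ⊥ := by
  rw [eq_bot_iff_rowLen_zero_eq_zero]
  rcases Nat.eq_zero_or_pos N with rfl | hpos
  · exact rowLen_eq_zero_iff_colLen_le.2 hN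
  · have := mem_range.1 (h ▸ mem_betaSet.2 ⟨0, hpos, rfl⟩)
    unfold betaFn at this
    omega

end Beta

namespace IsBorderStrip

variable {N : ℕ} {lam mu : YoungDiagram} {r1 r2 : ℕ}

lemma betaFn_last_add_card (h : IsBorderStrip lam mu r1 r2) (hN : r2 < N) :
    betaFn N mu r2 + (skewCells mu lam).card = betaFn N lam r1 := by
  have := h.card_skewCells
  have := h.rows_le
  unfold betaFn
  omega

lemma betaFn_last_lt (h : IsBorderStrip lam mu r1 r2) (hN : r2 < N) {i : ℕ} (hi : i ≤ r2) :
    betaFn N mu r2 < betaFn N lam i := by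
  have := betaFn_add_le (lam := lam) hi hN
  have := h.rowLen_lt
  unfold betaFn at *
  omega

lemma betaFn_lt_last (h : IsBorderStrip lam mu r1 r2) {i : ℕ} (hi : r2 < i) (hN : i < N) :
    betaFn N lam i < betaFn N mu r2 := by
  have := betaFn_add_le (lam := lam) (i := r2 + 1) hi hN
  have := h.rowLen_eq (r2 + 1) (.inr (lt_add_one r2))
  have := mu.rowLen_anti r2 (r2 + 1) (by omega)
  unfold betaFn at *
  omega

lemma betaFn_last_notMem (h : IsBorderStrip lam mu r1 r2) (hN : r2 < N) :
    betaFn N mu r2 ∉ betaSet N lam := by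
  rw [mem_betaSet]
  rintro ⟨i, hi, he⟩
  rcases le_or_gt i r2 with hir | hir
  · exact (h.betaFn_last_lt hN hir).ne' he
  · exact (h.betaFn_lt_last hir hi).ne he

lemma betaSet_eq (h : IsBorderStrip lam mu r1 r2) (hN : r2 < N) :
    betaSet N mu = insert (betaFn N mu r2) ((betaSet N lam).erase (betaFn N lam r1)) := by
  have h12 := h.rows_le
  have hr1 : r1 < N := h12.trans_lt hN
  -- the beads of rows `r1 + 1, …, r2` move up one row, the others stay
  have hshift : ∀ i, r1 ≤ i → i < r2 → betaFn N mu i = betaFn N lam (i + 1) := by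
    intro i h1 h2
    have := h.rowLen_succ i h1 h2
    unfold betaFn
    omega
  have hfix : ∀ i, i < r1 ∨ r2 < i → betaFn N mu i = betaFn N lam i := fun i hi => by
    unfold betaFn
    rw [h.rowLen_eq i hi]
  have hne : ∀ i < N, i ≠ r1 → betaFn N lam i ≠ betaFn N lam r1 := fun i hi hir he =>
    hir (betaFn_injOn hi hr1 he)
  ext x
  simp only [mem_insert, mem_erase, mem_betaSet]
  constructor
  · rintro ⟨i, hi, rfl⟩
    by_cases hir : i = r2
    · exact .inl (hir ▸ rfl)
    right
    by_cases hmid : r1 ≤ i ∧ i < r2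
    · rw [hshift i hmid.1 hmid.2]
      exact ⟨hne (i + 1) (by omega) (by omega), i + 1, by omega, rfl⟩
    · rw [hfix i (by omega)]
      exact ⟨hne i hi (by omega), i, hi, rfl⟩
  · rintro (rfl | ⟨hx, i, hi, rfl⟩)
    · exact ⟨r2, hN, rfl⟩
    have hir : i ≠ r1 := by rintro rfl; exact hx rfl
    by_cases hmid : r1 < i ∧ i ≤ r2
    · refine ⟨i - 1, by omega, ?_⟩
      rw [hshift (i - 1) (by omega) (by omega), Nat.sub_add_cancel (by omega)]
    · exact ⟨i, hi, hfix i (by omega)⟩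

lemma card_filter_betaSet (h : IsBorderStrip lam mu r1 r2) (hN : r2 < N) :
    ((betaSet N lam).filter fun x => betaFn N mu r2 < x ∧ x ≤ betaFn N lam r1).card =
      r2 - r1 + 1 := by
  have hr1 : r1 < N := h.rows_le.trans_lt hN
  have hsub : (betaSet N lam).filter (fun x => betaFn N mu r2 < x ∧ x ≤ betaFn N lam r1) =
      (Icc r1 r2).image (betaFn N lam) := by
    ext x
    simp only [mem_filter, mem_image, mem_Icc, mem_betaSet]
    constructor
    · rintro ⟨⟨i, hi, rfl⟩, hlo, hhi⟩
      refine ⟨i, ⟨?_, ?_⟩, rfl⟩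
      · by_contra! hir
        exact (betaFn_lt_betaFn hir hr1).not_ge hhi
      · by_contra! hir
        exact (h.betaFn_lt_last hir hi).not_gt hlo
    · rintro ⟨i, ⟨hi1, hi2⟩, rfl⟩
      exact ⟨⟨i, by omega, rfl⟩, h.betaFn_last_lt hN hi2,
        (betaFn_add_le (lam := lam) hi1 (by omega)).trans' (Nat.le_add_right _ _)⟩
  rw [hsub, card_image_of_injOn (betaFn_injOn.mono fun i hi => by
    simp only [coe_Icc, Set.mem_Icc] at hi; exact Set.mem_Iio.2 (by omega)), Nat.card_Icc]
  have := h.rows_le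
  omega

end IsBorderStrip

section Abacus

variable {n N : ℕ} {lam mu : YoungDiagram}

/-- Removing an `n`-rim hook moves one bead of the abacus from `b` to the empty position `b - n`;
the beads in `(b - n, b]` count the rows of the hook. -/
lemma IsRimHookRemoval.exists_bead_move (hn : n ≠ 0) (h : IsRimHookRemoval n lam mu)
    (hN : lam.colLen 0 ≤ N) :
    ∃ b ∈ betaSet N lam, n ≤ b ∧ b - n ∉ betaSet N lam ∧
      betaSet N mu = insert (b - n) ((betaSet N lam).erase b) ∧
      hookWidth lam mu + ((betaSet N lam).filter fun x => b - n < x ∧ x ≤ b).card = n + 1 := by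
  obtain ⟨r1, r2, hs⟩ := h.exists_isBorderStrip hn
  have hr2 : r2 < N := by
    have := hs.rowLen_lt
    by_contra! hle
    have := rowLen_eq_zero_iff_colLen_le.2 (hN.trans hle)
    omega
  have hmove := hs.betaFn_last_add_card hr2
  rw [h.2.1] at hmove
  have hb : betaFn N lam r1 - n = betaFn N mu r2 := by omega
  refine ⟨betaFn N lam r1, mem_betaSet.2 ⟨r1, hs.rows_le.trans_lt hr2, rfl⟩, by omega,
    ?_, ?_, ?_⟩
  · rw [hb]; exact hs.betaFn_last_notMem hr2
  · rw [hb]; exact hs.betaSet_eq hr2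
  · rw [hb, hs.card_filter_betaSet hr2, hs.hookWidth_eq]
    have := hs.card_skewCells
    have := h.2.1
    have := lam.rowLen_anti r1 r2 hs.rows_le
    have := hs.rowLen_lt
    omega

lemma exists_rimStep_of_bead_move (hN : lam.colLen 0 ≤ N) {b : ℕ} (hb : b ∈ betaSet N lam)
    (hnb : n ≤ b) (hbn : b - n ∉ betaSet N lam) : ∃ mu, RimStep n lam mu := by
  obtain ⟨r1, hr1, rfl⟩ := mem_betaSet.1 hb
  have hn : n ≠ 0 := by rintro rfl; exact hbn hb
  -- the hook ends in the lowest row whose bead lies beyond the target position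
  obtain ⟨r2, hr2_def⟩ : ∃ r2, r2 =
      Nat.findGreatest (fun i => betaFn N lam r1 - n < betaFn N lam i) (N - 1) := ⟨_, rfl⟩
  have hr12 : r1 ≤ r2 := hr2_def ▸ Nat.le_findGreatest (by omega) (by omega)
  have hr2 : r2 < N := hr2_def ▸ (Nat.findGreatest_le _).trans_lt (by omega)
  have hlast : betaFn N lam r1 - n < betaFn N lam r2 := hr2_def ▸
    Nat.findGreatest_spec (P := fun i => betaFn N lam r1 - n < betaFn N lam i) (m := r1)
      (by omega) (by omega)
  have hbelow : lam.rowLen (r2 + 1) + (N - 1 - r2) ≤ betaFn N lam r1 - n := by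
    rcases lt_or_ge (r2 + 1) N with hlt | hge
    · have hle := Nat.findGreatest_is_greatest (hr2_def ▸ lt_add_one r2) (by omega)
      have hne : betaFn N lam (r2 + 1) ≠ betaFn N lam r1 - n := fun he =>
        hbn (mem_betaSet.2 ⟨r2 + 1, hlt, he⟩)
      rw [← hr2_def] at hle
      unfold betaFn at hle hne ⊢
      omega
    · rw [rowLen_eq_zero_iff_colLen_le.2 (hN.trans hge)]
      unfold betaFn
      omega
  unfold betaFn at hnb hlast hbelow
  obtain ⟨mu, hs, hmu⟩ := exists_isBorderStrip_rowLen_eq (lam := lam)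
    (m := lam.rowLen r1 + (N - 1 - r1) - n - (N - 1 - r2)) hr12 (by omega) (by omega)
  have hcard : (skewCells mu lam).card = n := by
    have := hs.card_skewCells
    omega
  exact ⟨mu, hcard ▸ hs.isRimHookRemoval⟩

end Abacus

/-- The shape `(k^d, d^l)`: `d` rows of length `k` above `l` rows of length `d`. -/
def fatHook (l k d : ℕ) : YoungDiagram := rect d k ⊔ rect (d + l) d

/-- The abacus with `d + l` beads reached from `fatHook l k d` after moving the beads
`t + (l + k)`, `t ∈ A`, down to `t`. -/
def abacusState (l k d : ℕ) (A : Finset ℕ) : Finset ℕ :=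
  ((range d \ A).image (· + (l + k))) ∪ Ico d (d + l) ∪ A

section FatHook

variable {l k d : ℕ}

lemma rowLen_fatHook (hdk : d ≤ k) (i : ℕ) :
    (fatHook l k d).rowLen i = if i < d then k else if i < d + l then d else 0 :=
  rowLen_eq_of_forall_mem_iff fun j => by
    rw [fatHook, YoungDiagram.mem_sup, mem_rect, mem_rect]
    split_ifs <;> omega

lemma colLen_fatHook_le (hdk : d ≤ k) : (fatHook l k d).colLen 0 ≤ d + l :=
  rowLen_eq_zero_iff_colLen_le.1 (by rw [rowLen_fatHook hdk]; simp)

lemma mem_abacusState {A : Finset ℕ} {x : ℕ} :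
    x ∈ abacusState l k d A ↔
      (l + k ≤ x ∧ x - (l + k) < d ∧ x - (l + k) ∉ A) ∨ (d ≤ x ∧ x < d + l) ∨
        x ∈ A := by
  simp only [abacusState, mem_union, mem_image, mem_sdiff, mem_range, mem_Ico, or_assoc]
  refine or_congr ⟨?_, fun h => ⟨x - (l + k), ⟨h.2.1, h.2.2⟩, by omega⟩⟩ Iff.rfl
  rintro ⟨t, ht, rfl⟩
  simpa using ht

lemma betaSet_fatHook (hdk : d ≤ k) :
    betaSet (d + l) (fatHook l k d) = abacusState l k d ∅ := by
  ext x
  simp only [mem_betaSet, mem_abacusState, betaFn, rowLen_fatHook hdk, notMem_empty,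
    not_false_eq_true, and_true, or_false]
  constructor
  · rintro ⟨i, hi, rfl⟩
    split_ifs <;> omega
  · rintro (hx | hx)
    · exact ⟨d - 1 - (x - (l + k)), by omega, by split_ifs <;> omega⟩
    · exact ⟨2 * d + l - 1 - x, by omega, by split_ifs <;> omega⟩

lemma abacusState_range : abacusState l k d (range d) = range (d + l) := by
  ext x
  simp only [mem_abacusState, mem_range]
  omega

end FatHook

section AbacusState

variable {l k d t : ℕ} {A : Finset ℕ}

lemma exists_eq_add_of_mem_abacusState (hdk : d ≤ k) (hA : A ⊆ range d) {b : ℕ}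
    (hb : b ∈ abacusState l k d A) (hnb : l + k ≤ b) :
    ∃ t < d, t ∉ A ∧ b = t + (l + k) := by
  rcases mem_abacusState.1 hb with h | h | h
  · exact ⟨b - (l + k), h.2.1, h.2.2, by omega⟩
  · omega
  · have := mem_range.1 (hA h)
    omega

lemma insert_erase_abacusState (hdk : d ≤ k) (hA : A ⊆ range d) (ht : t < d) :
    insert t ((abacusState l k d A).erase (t + (l + k))) = abacusState l k d (insert t A) := by
  ext x
  have hxA : ∀ y ∈ A, y < d := fun y hy => mem_range.1 (hA hy)
  simp only [mem_insert, mem_erase, mem_abacusState]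
  by_cases hx : x ∈ A
  · have := hxA x hx
    simp only [hx, or_true, and_true, iff_true]
    omega
  by_cases hx' : x - (l + k) ∈ A
  · have := hxA _ hx'
    simp only [hx, hx', or_true, not_true_eq_false, and_false, or_false, false_or]
    omega
  · simp only [hx, hx', not_false_eq_true, and_true, or_false]
    omega

lemma card_filter_abacusState (hdk : d ≤ k) (hA : A ⊆ range d) (ht : t < d) (htA : t ∉ A) :
    ((abacusState l k d A).filter fun x => t < x ∧ x ≤ t + (l + k)).card =
      l + 1 + (range t \ A).card + (A.filter (t < ·)).card := by
  have hxA : ∀ x ∈ A, x < d := fun x hx => mem_range.1 (hA hx)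
  have hshift : ((range d \ A).image (· + (l + k))).filter (fun x => t < x ∧ x ≤ t + (l + k)) =
      (insert t (range t \ A)).image (· + (l + k)) := by
    ext x
    simp only [mem_filter, mem_image, mem_insert, mem_sdiff, mem_range]
    constructor
    · rintro ⟨⟨s, hs, rfl⟩, -, hx⟩
      exact ⟨s, by rcases Nat.lt_or_eq_of_le (by omega : s ≤ t) with h | h <;> simp_all, rfl⟩
    · rintro ⟨s, hs | hs, rfl⟩
      · exact ⟨⟨s, ⟨by omega, hs ▸ htA⟩, rfl⟩, by omega, by omega⟩
      · exact ⟨⟨s, ⟨by omega, hs.2⟩, rfl⟩, by omega, by omega⟩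
  have hmid : (Ico d (d + l)).filter (fun x => t < x ∧ x ≤ t + (l + k)) = Ico d (d + l) :=
    filter_true_of_mem fun x hx => by rw [mem_Ico] at hx; omega
  have hlow : A.filter (fun x => t < x ∧ x ≤ t + (l + k)) = A.filter (t < ·) :=
    filter_congr fun x hx => by have := hxA x hx; omega
  rw [abacusState, filter_union, filter_union, hshift, hmid, hlow,
    card_union_of_disjoint, card_union_of_disjoint,
    card_image_of_injective _ (add_left_injective _),
    card_insert_of_notMem (by simp), Nat.card_Ico]
  · omega
  · rw [disjoint_left]
    intro x hx hx'
    simp only [mem_image, mem_Ico] at hx hx'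
    omega
  · rw [disjoint_left]
    intro x hx hx'
    have := hxA x (mem_filter.1 hx').1
    simp only [mem_union, mem_image, mem_Ico] at hx
    omega

lemma card_sdiff_add_card_filter_add_two_mul (htA : t ∉ A) :
    (range t \ A).card + (A.filter (t < ·)).card + 2 * (range t ∩ A).card = t + A.card := by
  have hbelow := card_inter_add_card_sdiff (range t) A
  have hsplit := card_filter_add_card_filter_not (s := A) (· < t)
  have hlt : A.filter (· < t) = range t ∩ A := by ext; simp [and_comm]
  have hgt : A.filter (fun x => ¬ x < t) = A.filter (t < ·) :=
    filter_congr fun x hx => by have : x ≠ t := fun h => htA (h ▸ hx); omega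
  rw [hlt, hgt] at hsplit
  rw [card_range] at hbelow
  omega

end AbacusState

lemma IsCore.pos {n : ℕ} {t : YoungDiagram} (h : IsCore n t) : 0 < n := by
  refine Nat.pos_of_ne_zero fun hn => h ⟨t, le_rfl, ?_, ?_, ?_⟩ <;>
    simp [skewCells, hn]

section RimHookSequence

variable {l k d : ℕ} {A : Finset ℕ} {lam : YoungDiagram}

lemma exists_abacusState_insert_of_rimStep (hdk : d ≤ k) (hA : A ⊆ range d)
    (hcol : lam.colLen 0 ≤ d + l) (hbeta : betaSet (d + l) lam = abacusState l k d A)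
    (hn : 0 < l + k) {nu : YoungDiagram} (hstep : RimStep (l + k) lam nu) :
    ∃ t < d, t ∉ A ∧ betaSet (d + l) nu = abacusState l k d (insert t A) ∧
      (-1 : ℤ) ^ (k - hookWidth lam nu) = (-1) ^ (t + A.card) := by
  obtain ⟨b, hb, hnb, -, hnu, hwidth⟩ := hstep.exists_bead_move hn.ne' hcol
  rw [hbeta] at hb hnu hwidth
  obtain ⟨t, ht, htA, rfl⟩ := exists_eq_add_of_mem_abacusState hdk hA hb hnb
  rw [Nat.add_sub_cancel, card_filter_abacusState hdk hA ht htA] at hwidth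
  rw [Nat.add_sub_cancel, insert_erase_abacusState hdk hA ht] at hnu
  refine ⟨t, ht, htA, hnu, ?_⟩
  rw [← card_sdiff_add_card_filter_add_two_mul htA, pow_add, pow_mul, neg_one_sq, one_pow,
    mul_one]
  congr 1
  omega

lemma eq_range_of_isCore (hdk : d ≤ k) (hA : A ⊆ range d) (hcol : lam.colLen 0 ≤ d + l)
    (hbeta : betaSet (d + l) lam = abacusState l k d A) (hcore : IsCore (l + k) lam) :
    A = range d := by
  by_contra hne
  obtain ⟨t, ht, htA⟩ := exists_of_ssubset (hA.ssubset_of_ne hne)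
  have hout : t ∉ abacusState l k d A := by
    rw [mem_abacusState]
    simp only [htA, or_false]
    have := mem_range.1 ht
    omega
  refine hcore (exists_rimStep_of_bead_move (b := t + (l + k)) hcol ?_ (by omega) ?_)
  · rw [hbeta, mem_abacusState]
    simp only [Nat.add_sub_cancel]
    exact .inl ⟨by omega, mem_range.1 ht, htA⟩
  · rwa [hbeta, Nat.add_sub_cancel]

/-- Every maximal sequence of `(l + k)`-rim hook removals from a diagram with abacus
`abacusState l k d A` moves the remaining `d - #A` beads one at a time. -/
lemma reachesInSign_of_betaSet_eq_abacusState (hdk : d ≤ k) (m : ℕ) :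
    ∀ (A : Finset ℕ) (s : ℤ) (lam tau : YoungDiagram), A ⊆ range d →
      lam.colLen 0 ≤ d + l → betaSet (d + l) lam = abacusState l k d A →
      ReachesInSign (l + k) k m s lam tau → IsCore (l + k) tau →
      tau = ⊥ ∧ m + A.card = d ∧
        s = (-1) ^ (∑ t ∈ range d \ A, t + ∑ j ∈ Ico A.card d, j) := by
  induction m with
  | zero =>
    rintro A s lam tau hA hcol hbeta ⟨rfl, rfl⟩ hcore
    obtain rfl := eq_range_of_isCore hdk hA hcol hbeta hcore
    rw [abacusState_range] at hbeta
    simp [eq_bot_of_betaSet_eq_range hcol hbeta]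
  | succ m ih =>
    rintro A s lam tau hA hcol hbeta ⟨nu, s', hstep, hrest, rfl⟩ hcore
    obtain ⟨t, ht, htA, hnu, hsign⟩ :=
      exists_abacusState_insert_of_rimStep hdk hA hcol hbeta hcore.pos hstep
    obtain ⟨htau, hm, rfl⟩ := ih (insert t A) s' nu tau (insert_subset (mem_range.2 ht) hA)
      ((colLen_le_colLen hstep.1 0).trans hcol) hnu hrest hcore
    rw [card_insert_of_notMem htA] at hm
    refine ⟨htau, by omega, ?_⟩
    rw [hsign, ← pow_add, card_insert_of_notMem htA,
      sum_eq_sum_Ico_succ_bot (a := A.card) (by omega),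
      ← add_sum_erase (range d \ A) _ (mem_sdiff.2 ⟨mem_range.2 ht, htA⟩), ← sdiff_insert]
    ring_nf

end RimHookSequence

namespace IsLRTableau

variable {lam mu nu : YoungDiagram} {T : ℕ × ℕ → ℕ}

lemma one_le (hT : IsLRTableau lam mu nu T) {p : ℕ × ℕ} (hp : p ∈ skewCells lam nu) :
    1 ≤ T p :=
  (hT.2.1 p).2 hp

lemma le_colLen_s11 (hT : IsLRTableau lam mu nu T) {p : ℕ × ℕ} (hp : p ∈ skewCells lam nu) :
    T p ≤ mu.colLen 0 := by
  by_contra! hlt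
  have hcount := hT.2.2.2.2.1 (T p - 1)
  rw [rowLen_eq_zero_iff_colLen_le.2 (by omega), card_eq_zero] at hcount
  have := hT.one_le hp
  exact (eq_empty_iff_forall_notMem.1 hcount) p (mem_filter.2 ⟨hp, by omega⟩)

lemma card_skewCells (hT : IsLRTableau lam mu nu T) :
    (skewCells lam nu).card = mu.cells.card := by
  rw [card_cells_eq_sum_rowLen mu le_rfl,
    card_eq_sum_card_fiberwise (f := fun p => T p - 1) (t := range (mu.colLen 0)) fun p hp => by
      have := hT.le_colLen_s11 hp; have := hT.one_le hp; simp only [coe_range, Set.mem_Iio]; omega]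
  refine sum_congr rfl fun r _ => ?_
  rw [← hT.2.2.2.2.1 r]
  congr 1
  exact filter_congr fun p hp => by have := hT.one_le hp; omega

lemma add_le_of_column (hT : IsLRTableau lam mu nu T) {i j s : ℕ}
    (hcol : ∀ s' ≤ s, (i + s', j) ∈ skewCells lam nu) : T (i, j) + s ≤ T (i + s, j) := by
  induction s with
  | zero => simp
  | succ s ih =>
    have := hT.2.2.2.1 (i + s) (i + (s + 1)) j (by omega) (hcol s (by omega)) (hcol _ le_rfl)
    have := ih fun s' hs' => hcol s' (by omega)
    omega

lemma lt_colLen_of_column (hT : IsLRTableau lam mu nu T) {i j s : ℕ}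
    (hcol : ∀ s' ≤ s, (i + s', j) ∈ skewCells lam nu) : s < mu.colLen 0 := by
  have := hT.add_le_of_column hcol
  have := hT.one_le (hcol 0 (Nat.zero_le s))
  have := hT.le_colLen_s11 (hcol s le_rfl)
  rw [add_zero] at *
  omega

lemma eq_of_column (hT : IsLRTableau lam mu nu T) {i j : ℕ}
    (hcol : ∀ s < mu.colLen 0, (i + s, j) ∈ skewCells lam nu) {s : ℕ} (hs : s < mu.colLen 0) :
    T (i + s, j) = s + 1 := by
  have hlow := hT.add_le_of_column (s := s) fun s' hs' => hcol s' (by omega)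
  have hhigh := hT.add_le_of_column (i := i + s) (s := mu.colLen 0 - 1 - s)
    fun s' hs' => by rw [add_assoc]; exact hcol _ (by omega)
  have hfirst := hT.one_le (hcol 0 (by omega))
  have hlast := hT.le_colLen_s11 (hcol (s + (mu.colLen 0 - 1 - s)) (by omega))
  rw [add_zero] at hfirst
  rw [add_assoc] at hhigh
  omega

end IsLRTableau

/-- Both rectangles of the skew shape `fatHook l k d / (d^l)` are filled with `i` in their
`i`-th row. -/
def fatHookFilling (l k d : ℕ) (p : ℕ × ℕ) : ℕ :=
  if p.1 < d ∧ d ≤ p.2 ∧ p.2 < k then p.1 + 1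
  else if l ≤ p.1 ∧ p.1 < l + d ∧ p.2 < d then p.1 + 1 - l else 0

section FatHookTableau

variable {l k d : ℕ}

lemma card_cells_fatHook (hdk : d ≤ k) : (fatHook l k d).cells.card = l * d + d * k := by
  have htop : ∑ i ∈ range d, (fatHook l k d).rowLen i = ∑ i ∈ range d, k :=
    sum_congr rfl fun i hi => by rw [rowLen_fatHook hdk, if_pos (mem_range.1 hi)]
  have hbottom : ∑ i ∈ range l, (fatHook l k d).rowLen (d + i) = ∑ i ∈ range l, d :=
    sum_congr rfl fun i hi => by
      rw [rowLen_fatHook hdk, if_neg (by omega), if_pos (by simp only [mem_range] at hi; omega)]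
  rw [card_cells_eq_sum_rowLen _ (colLen_fatHook_le hdk), sum_range_add, htop, hbottom]
  simp [mul_comm, add_comm]

lemma mem_skewCells_fatHook (hdl : d ≤ l) (hdk : d ≤ k) {i j : ℕ} :
    (i, j) ∈ skewCells (rect l d) (fatHook l k d) ↔
      (i < d ∧ d ≤ j ∧ j < k) ∨ (l ≤ i ∧ i < l + d ∧ j < d) := by
  rw [mem_skewCells, rowLen_rect, rowLen_fatHook hdk]
  split_ifs <;> omega

lemma IsLRTableau.eq_fatHook (hdk : d ≤ k) {rho : YoungDiagram} {T : ℕ × ℕ → ℕ}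
    (hrow : rho.rowLen 0 ≤ k) (hT : IsLRTableau (rect l d) (rect d k) rho T) :
    rho = fatHook l k d := by
  have hcolLen : (rect d k).colLen 0 ≤ d := rowLen_eq_zero_iff_colLen_le.1 (by simp [rowLen_rect])
  have hshort : ∀ i, d ≤ i → rho.rowLen i ≤ d := fun i hi => by
    by_contra! hlt
    have := hT.lt_colLen_of_column (i := 0) (j := d) (s := i) fun s' hs' => by
      have := rho.rowLen_anti (0 + s') i (by omega)
      rw [mem_skewCells, rowLen_rect]
      split_ifs <;> omega
    omega
  have hzero : ∀ i, l + d ≤ i → rho.rowLen i = 0 := fun i hi => by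
    by_contra! hpos
    have := hT.lt_colLen_of_column (i := l) (j := 0) (s := i - l) fun s' hs' => by
      have := rho.rowLen_anti (l + s') i (by omega)
      rw [mem_skewCells, rowLen_rect]
      split_ifs <;> omega
    omega
  have hle : rho ≤ fatHook l k d := le_iff_forall_rowLen_le.2 fun i => by
    have := rho.rowLen_anti 0 i (Nat.zero_le i)
    have := hshort i
    have := hzero i
    rw [rowLen_fatHook hdk]
    split_ifs <;> omega
  refine YoungDiagram.ext (eq_of_subset_of_card_le (cells_subset_iff.2 hle) ?_)
  rw [card_cells_fatHook hdk, card_cells_eq_add_card_skewCells hT.1, hT.card_skewCells,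
    card_cells_rect, card_cells_rect]

lemma IsLRTableau.eq_fatHookFilling (hdl : d ≤ l) (hdk : d ≤ k) {T : ℕ × ℕ → ℕ}
    (hT : IsLRTableau (rect l d) (rect d k) (fatHook l k d) T) : T = fatHookFilling l k d := by
  funext ⟨i, j⟩
  by_cases hmem : (i, j) ∈ skewCells (rect l d) (fatHook l k d)
  · have hmem' := (mem_skewCells_fatHook hdl hdk).1 hmem
    have hcolLen : (rect d k).colLen 0 = d := colLen_rect (by omega)
    rcases hmem' with ⟨h1, h2, h3⟩ | ⟨h1, h2, h3⟩
    · have := hT.eq_of_column (i := 0) (j := j) (s := i)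
        (fun s hs => (mem_skewCells_fatHook hdl hdk).2 (.inl (by omega))) (by omega)
      rw [zero_add] at this
      simp only [fatHookFilling, this]
      split_ifs <;> omega
    · have := hT.eq_of_column (i := l) (j := j) (s := i - l)
        (fun s hs => (mem_skewCells_fatHook hdl hdk).2 (.inr (by omega))) (by omega)
      rw [Nat.add_sub_cancel' h1] at this
      simp only [fatHookFilling, this]
      split_ifs <;> omega
  · have : ¬ 1 ≤ T (i, j) := fun h => hmem ((hT.2.1 _).1 h)
    rw [mem_skewCells_fatHook hdl hdk] at hmem
    simp only [fatHookFilling]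
    split_ifs <;> omega

lemma card_filter_fatHookFilling (hdl : d ≤ l) (hdk : d ≤ k) (r : ℕ) :
    ((skewCells (rect l d) (fatHook l k d)).filter fun p => fatHookFilling l k d p = r + 1).card =
      (rect d k).rowLen r := by
  rw [rowLen_rect]
  split_ifs with hr
  · have hsplit : (skewCells (rect l d) (fatHook l k d)).filter
          (fun p => fatHookFilling l k d p = r + 1) =
        {r} ×ˢ Ico d k ∪ {l + r} ×ˢ range d := by
      ext ⟨i, j⟩
      simp only [mem_filter, mem_skewCells_fatHook hdl hdk, mem_union, mem_product, mem_singleton,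
        mem_Ico, mem_range]
      simp only [fatHookFilling]
      split_ifs <;> omega
    rw [hsplit, card_union_of_disjoint (disjoint_left.2 fun p hp hp' => by
      simp only [mem_product, mem_singleton] at hp hp'; omega)]
    simp only [card_product, card_singleton, Nat.card_Ico, card_range]
    omega
  · refine card_eq_zero.2 (filter_false_of_mem fun ⟨i, j⟩ hp => ?_)
    rw [mem_skewCells_fatHook hdl hdk] at hp
    simp only [fatHookFilling]
    split_ifs <;> omega

/-- Moving one row up sends the entries `r + 2` of the reading word injectively to entries
`r + 1` read earlier, which gives the lattice property. -/
lemma card_filter_fatHookFilling_succ_le (hdl : d ≤ l) (hdk : d ≤ k) (i j r : ℕ) :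
    ((skewCells (rect l d) (fatHook l k d)).filter fun p =>
        fatHookFilling l k d p = r + 2 ∧ (p.1 < i ∨ (p.1 = i ∧ j ≤ p.2))).card ≤
      ((skewCells (rect l d) (fatHook l k d)).filter fun p =>
        fatHookFilling l k d p = r + 1 ∧ (p.1 < i ∨ (p.1 = i ∧ j ≤ p.2))).card := by
  refine card_le_card_of_injOn (fun p => (p.1 - 1, p.2)) (fun ⟨a, c⟩ hp => ?_)
    (fun ⟨a, c⟩ hp ⟨a', c'⟩ hp' he => ?_)
  · simp only [coe_filter, Set.mem_ofPred_eq, mem_skewCells_fatHook hdl hdk] at hp ⊢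
    simp only [fatHookFilling] at hp ⊢
    split_ifs at hp ⊢ <;> omega
  · simp only [coe_filter, Set.mem_ofPred_eq, mem_skewCells_fatHook hdl hdk,
      Prod.mk.injEq] at hp hp' he ⊢
    simp only [fatHookFilling] at hp hp'
    split_ifs at hp hp' <;> omega

lemma isLRTableau_fatHookFilling (hdl : d ≤ l) (hdk : d ≤ k) :
    IsLRTableau (rect l d) (rect d k) (fatHook l k d) (fatHookFilling l k d) := by
  refine ⟨le_iff_forall_rowLen_le.2 fun i => ?_, fun ⟨i, j⟩ => ?_, fun i j j' _ hm hm' => ?_,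
    fun i i' j _ hm hm' => ?_, card_filter_fatHookFilling hdl hdk,
    card_filter_fatHookFilling_succ_le hdl hdk⟩
  · rw [rowLen_rect, rowLen_fatHook hdk]
    split_ifs <;> omega
  all_goals
    simp only [mem_skewCells_fatHook hdl hdk, fatHookFilling] at *
    split_ifs <;> omega

lemma lrCoeff_fatHook (hdl : d ≤ l) (hdk : d ≤ k) :
    lrCoeff (rect l d) (rect d k) (fatHook l k d) = 1 :=
  Nat.card_eq_one_iff_unique.2
    ⟨⟨fun T T' => Subtype.ext <| (T.2.eq_fatHookFilling hdl hdk).trans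
      (T'.2.eq_fatHookFilling hdl hdk).symm⟩, ⟨⟨_, isLRTableau_fatHookFilling hdl hdk⟩⟩⟩

end FatHookTableau

theorem quantum_product_of_rectangles_general (l k d : ℕ) (hdl : d ≤ l) (hdk : d ≤ k) :
    (∃ rho : YoungDiagram, rho.rowLen 0 ≤ k ∧ lrCoeff (rect l d) (rect d k) rho ≠ 0) ∧
    (∀ rho : YoungDiagram, rho.rowLen 0 ≤ k → lrCoeff (rect l d) (rect d k) rho ≠ 0 →
      lrCoeff (rect l d) (rect d k) rho = 1 ∧
      ∀ (m : ℕ) (s : ℤ) (tau : YoungDiagram),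
        ReachesInSign (l + k) k m s rho tau → IsCore (l + k) tau →
        tau = ⊥ ∧ m = d ∧ s = 1) := by
  have hfirst : (fatHook l k d).rowLen 0 ≤ k := by rw [rowLen_fatHook hdk]; split_ifs <;> omega
  refine ⟨⟨fatHook l k d, hfirst, by rw [lrCoeff_fatHook hdl hdk]; exact one_ne_zero⟩,
    fun rho hrow hne => ?_⟩
  obtain ⟨⟨T, hT⟩⟩ := (Nat.card_ne_zero.1 hne).1
  obtain rfl := hT.eq_fatHook hdk hrow
  refine ⟨lrCoeff_fatHook hdl hdk, fun m s tau hreach hcore => ?_⟩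
  obtain ⟨htau, hm, rfl⟩ := reachesInSign_of_betaSet_eq_abacusState hdk m ∅ s _ tau
    (empty_subset _) (colLen_fatHook_le hdk) (betaSet_fatHook hdk) hreach hcore
  refine ⟨htau, by simpa using hm, ?_⟩
  rw [card_empty, sdiff_empty, ← range_eq_Ico, ← two_mul, pow_mul, neg_one_sq, one_pow]

/-- In `QH^*(Gr(l, l+k))` with `n = l + k` and `0 ≤ d ≤ min(l,k)`, the quantum
product `σ_{(d^l)} * σ_{(k^d)}` equals `q^d`: via the rim hook rule, some `rho` with first
part `≤ k` has `c^rho_{(d^l),(k^d)} ≠ 0`, and every such `rho` has `c = 1`, empty `n`-core,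
`d` removed rim hooks, and total sign `+1`. -/
theorem quantum_product_of_rectangles (l k d : ℕ) (hl : 1 ≤ l) (hk : 1 ≤ k)
    (hdl : d ≤ l) (hdk : d ≤ k) :
    (∃ rho : YoungDiagram, rho.rowLen 0 ≤ k ∧ lrCoeff (rect l d) (rect d k) rho ≠ 0) ∧
    (∀ rho : YoungDiagram, rho.rowLen 0 ≤ k → lrCoeff (rect l d) (rect d k) rho ≠ 0 →
      lrCoeff (rect l d) (rect d k) rho = 1 ∧
      ∀ (m : ℕ) (s : ℤ) (tau : YoungDiagram),
        ReachesInSign (l + k) k m s rho tau → IsCore (l + k) tau →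
        tau = ⊥ ∧ m = d ∧ s = 1) :=
  quantum_product_of_rectangles_general l k d hdl hdk

end QCGrass
end
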